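/- arXiv:2604.14584 — 13 statements merged into one kernel-verified Lean document; each statement's English description precedes it below -/
import Mathlib

section
/- Let R be a Noetherian F-finite commutative ring of characteristic p, let (M,C) be a q-Cartier module over R, let N ⊆ M be an R-submodule and let f ∈ R. (1) If m ≥ 1 and a is an integer with 0 ≤ a < q^{m+1} and a ∈ ν_f(q^{m+1};N), then the unique integer a_m ∈ [0,q^m) with a ≡ a_m (mod q^m) belongs to ν_f(q^m;N). (2) A p-adic integer α ∈ ℤ_p belongs to ν_f(q^∞;N) if and only if for every m ≥ 1 the unique integer α_m ∈ [0,q^m) with α − α_m ∈ q^m ℤ_p belongs to ν_f(q^m;N). -/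
open Pointwise Function

/-- The set of ν-invariants of level `m` of a subset `N` of a `q`-Cartier module `(M, C)`
with respect to `f`: those `n : ℕ` with `C^m(f^n N) ≠ C^m(f^{n+1} N)`. -/
def nuLevel {R M : Type*} [CommRing R] [AddCommGroup M] [Module R M]
    (C : M → M) (f : R) (N : Set M) (m : ℕ) : Set ℕ :=
  {n | C^[m] '' (f ^ n • N) ≠ C^[m] '' (f ^ (n + 1) • N)}

/-- The set of ν-invariants of infinite level: those `α ∈ ℤ_p` such that for every `m ≥ 1`
there is `n ∈ ν_f(q^m; N)` with `α - n ∈ q^m ℤ_p`. -/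
def nuInfinite {R M : Type*} [CommRing R] [AddCommGroup M] [Module R M]
    (p : ℕ) [Fact p.Prime] (q : ℕ) (C : M → M) (f : R) (N : Set M) : Set ℤ_[p] :=
  {α | ∀ m : ℕ, 1 ≤ m → ∃ n ∈ nuLevel C f N m, ((q : ℤ_[p]) ^ m) ∣ (α - (n : ℤ_[p]))}

section Aux

variable {R M : Type*} [CommRing R] [AddCommGroup M] [Module R M]

lemma cartier_iterate_pt (q : ℕ) (C : M → M)
    (hCsl : ∀ (a : R) (x : M), C (a ^ q • x) = a • C x) (g : R) :
    ∀ (m : ℕ) (x : M), C^[m] ((g ^ (q ^ m)) • x) = g • C^[m] x := by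
  intro m
  induction m with
  | zero => intro x; simp
  | succ m ih =>
    intro x
    rw [Function.iterate_succ_apply, Function.iterate_succ_apply,
      pow_succ, pow_mul, hCsl, ih]

lemma cartier_iterate_im (q : ℕ) (C : M → M)
    (hCsl : ∀ (a : R) (x : M), C (a ^ q • x) = a • C x) (g : R) (m : ℕ) (S : Set M) :
    C^[m] '' ((g ^ (q ^ m)) • S) = g • (C^[m] '' S) := by
  rw [← Set.image_smul, Set.image_image, ← Set.image_smul, Set.image_image]
  simp only [cartier_iterate_pt q C hCsl g m]

lemma cartier_key (q : ℕ) (C : M → M)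
    (hCsl : ∀ (a : R) (x : M), C (a ^ q • x) = a • C x) (f : R) (S : Set M)
    (m r c : ℕ)
    (h : C^[m] '' (f ^ r • S) = C^[m] '' (f ^ (r + 1) • S)) :
    C^[m] '' (f ^ (r + c * q ^ m) • S) = C^[m] '' (f ^ (r + 1 + c * q ^ m) • S) := by
  have e1 : ∀ r : ℕ, f ^ (r + c * q ^ m) • S = (f ^ c) ^ (q ^ m) • (f ^ r • S) := by
    intro r
    rw [smul_smul, ← pow_mul, ← pow_add, add_comm]
  rw [e1, e1 (r + 1), cartier_iterate_im q C hCsl, cartier_iterate_im q C hCsl, h]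

lemma nuLevel_mod (q : ℕ) (C : M → M)
    (hCsl : ∀ (a : R) (x : M), C (a ^ q • x) = a • C x) (f : R) (S : Set M)
    (m n : ℕ) (hn : n ∈ nuLevel C f S m) : n % q ^ m ∈ nuLevel C f S m := by
  by_contra h
  apply hn
  simp only [nuLevel, Set.mem_setOf_eq, not_not] at h ⊢
  have key := cartier_key q C hCsl f S m (n % q ^ m) (n / q ^ m) h
  have hdm := Nat.mod_add_div' n (q ^ m)
  rw [show n % q ^ m + n / q ^ m * q ^ m = n by omega,
    show n % q ^ m + 1 + n / q ^ m * q ^ m = n + 1 by omega] at key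
  exact key

end Aux

theorem stmt0 {R M : Type*} [CommRing R] [AddCommGroup M] [Module R M]
    (p : ℕ) [Fact p.Prime] [CharP R p] [IsNoetherianRing R]
    (hFF : (frobenius R p).Finite)
    (e q : ℕ) (he : 1 ≤ e) (hq : q = p ^ e)
    (C : M → M) (hCadd : ∀ x y : M, C (x + y) = C x + C y)
    (hCsl : ∀ (a : R) (x : M), C (a ^ q • x) = a • C x)
    (f : R) (N : Submodule R M) :
    (∀ m : ℕ, 1 ≤ m → ∀ a : ℕ, a < q ^ (m + 1) →
        a ∈ nuLevel C f (N : Set M) (m + 1) →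
        a % q ^ m ∈ nuLevel C f (N : Set M) m) ∧
    (∀ α : ℤ_[p], α ∈ nuInfinite p q C f (N : Set M) ↔
        ∀ m : ℕ, 1 ≤ m → ∃ n : ℕ, n < q ^ m ∧
          ((q : ℤ_[p]) ^ m ∣ α - (n : ℤ_[p])) ∧
          n ∈ nuLevel C f (N : Set M) m) := by
  have hq0 : 0 < q := hq ▸ pow_pos (Fact.out : p.Prime).pos e
  constructor
  · -- part (1)
    intro m hm a ha hmem
    by_contra h
    apply hmem
    simp only [nuLevel, Set.mem_setOf_eq, not_not] at h ⊢
    have key := cartier_key q C hCsl f (N : Set M) m (a % q ^ m) (a / q ^ m) h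
    have hdm := Nat.mod_add_div' a (q ^ m)
    rw [show a % q ^ m + a / q ^ m * q ^ m = a by omega,
      show a % q ^ m + 1 + a / q ^ m * q ^ m = a + 1 by omega] at key
    rw [Function.iterate_succ', Set.image_comp, Set.image_comp, key]
  · -- part (2)
    intro α
    constructor
    · intro hα m hm
      obtain ⟨n, hν, hdvd⟩ := hα m hm
      refine ⟨n % q ^ m, Nat.mod_lt _ (pow_pos hq0 m), ?_,
        nuLevel_mod q C hCsl f (N : Set M) m n hν⟩
      have hc : (n : ℤ_[p]) - ((n % q ^ m : ℕ) : ℤ_[p])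
          = (q : ℤ_[p]) ^ m * ((n / q ^ m : ℕ) : ℤ_[p]) := by
        have hdm : n = n % q ^ m + q ^ m * (n / q ^ m) := by
          have := Nat.mod_add_div n (q ^ m); omega
        nth_rewrite 1 [hdm]
        push_cast
        ring
      have he2 : α - ((n % q ^ m : ℕ) : ℤ_[p])
          = (α - (n : ℤ_[p])) + (q : ℤ_[p]) ^ m * ((n / q ^ m : ℕ) : ℤ_[p]) := by
        rw [← hc]; ring
      rw [he2]
      exact dvd_add hdvd (dvd_mul_right _ _)
    · intro hα m hm
      obtain ⟨n, _, hdvd, hν⟩ := hα m hm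
      exact ⟨n, hν, hdvd⟩
end

section
/- Let k be an F-finite field of characteristic p (that is, k is finitely generated as a module over its subfield k^p of p-th powers), let R be a finitely generated k-algebra, let (M,C) be a q-Cartier module over R with M finitely generated, let N ⊆ M be a finitely generated R-submodule and let f ∈ R. Then there exists a constant L ≥ 0 such that for every integer m ≥ 1, the number of integers n with 0 ≤ n < q^m and C^m(f^n N) ≠ C^m(f^{n+1} N) is at most L. -/
/-!
Choose generators `s ∋ 1` of `R` over `k` and `X` of `M` over `R`, and filter `M` by the
finite-dimensional `k`-subspaces `M_d = span_k (s^d • X)`. Every monomial of degree `d` in `s`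
is `v^q * w` with `v` of degree `≤ d / q` and `w` of degree `≤ #s * q`; as `k` is finite over
`k^q`, this gives `C(M_d) ⊆ M_{d/q + c}`, hence `C^m(M_d) ⊆ M_{d/q^m + 2c}` for all `m`.
The same decomposition at level `q^m` shows that for `n ≤ q^m` the submodule `C^m(f^n N)` is
generated by its intersection with the fixed space `M_D`, `D = #s + deg f + 2c`. So every jump
`C^m(f^n N) ≠ C^m(f^{n+1} N)` with `n < q^m` strictly lowers `dim_k (C^m(f^n N) ∩ M_D)`, and
there are at most `dim_k M_D` of them.
-/

open Pointwise Function

open Submodule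

def SpansOverPowers {k : Type*} [CommRing k] (Q : ℕ) (B : Finset k) : Prop :=
  ∀ c : k, ∃ g : k → k, c = ∑ b ∈ B, g b ^ Q * b

theorem RingHom.Finite.exists_finset_sum_eq {A B : Type*} [CommRing A] [CommRing B]
    {φ : A →+* B} (hφ : φ.Finite) :
    ∃ T : Finset B, ∀ c : B, ∃ g : B → A, c = ∑ b ∈ T, φ (g b) * b := by
  let := φ.toAlgebra
  obtain ⟨T, hT⟩ := (show Module.Finite A B from hφ).fg_top
  refine ⟨T, fun c => ?_⟩
  obtain ⟨g, -, hg⟩ := mem_span_finset.mp (hT ▸ mem_top : c ∈ span A (T : Set B))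
  exact ⟨g, by simp [← hg, Algebra.smul_def, RingHom.algebraMap_toAlgebra]⟩

theorem RingHom.Finite.iterateFrobenius {k : Type*} [CommRing k] {p : ℕ} [ExpChar k p]
    (h : (frobenius k p).Finite) (n : ℕ) : (iterateFrobenius k p n).Finite := by
  induction n with
  | zero => simpa using RingHom.Finite.id k
  | succ n ih => rw [iterateFrobenius_add k p n 1, iterateFrobenius_one]; exact ih.comp h

theorem RingHom.Finite.exists_spansOverPowers {k : Type*} [CommRing k] {p : ℕ} [ExpChar k p]
    (h : (frobenius k p).Finite) (n : ℕ) : ∃ B : Finset k, SpansOverPowers (p ^ n) B :=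
  (h.iterateFrobenius n).exists_finset_sum_eq

theorem ncard_le_of_antitone {g : ℕ → ℕ} (hg : Antitone g) {A : Set ℕ}
    (hA : ∀ n ∈ A, g (n + 1) < g n) : A.ncard ≤ g 0 := by
  have hanti : StrictAntiOn (fun n => g (n + 1)) A := fun a _ b hb hab =>
    (hA b hb).trans_le (hg hab)
  calc A.ncard ≤ (Set.Iio (g 0)).ncard :=
        Set.ncard_le_ncard_of_injOn _ (fun n hn => (hA n hn).trans_le (hg n.zero_le)) hanti.injOn
    _ = g 0 := by rw [← Finset.coe_Iio, Set.ncard_coe_finset, Nat.card_Iio]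

theorem mapsTo_iterate_of_mapsTo_div {M : Type*} {F : ℕ → Set M} (hF : Monotone F)
    {φ : M → M} {q c : ℕ} (hq : 2 ≤ q) (h : ∀ d, Set.MapsTo φ (F d) (F (d / q + c))) (m d : ℕ) :
    Set.MapsTo φ^[m] (F d) (F (d / q ^ m + 2 * c)) := by
  induction m with
  | zero => intro x hx; simpa using hF (Nat.le_add_right d (2 * c)) hx
  | succ m ih =>
    rw [iterate_succ']
    refine fun x hx => hF ?_ ((h _).comp ih hx)
    -- `(a + 2c) / q ≤ a / q + c` as soon as `q ≥ 2`
    have h1 := Nat.div_add_mod (d / q ^ m) q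
    have h2 := Nat.mod_lt (d / q ^ m) (by omega : q > 0)
    have : (d / q ^ m + 2 * c) / q < d / q ^ m / q + c + 1 :=
      (Nat.div_lt_iff_lt_mul (by omega)).2 (by nlinarith)
    rw [pow_succ, ← Nat.div_div_eq_div_mul]
    omega

theorem map_mem_of_mem_span {A M M' F : Type*} [Semiring A] [AddCommMonoid M] [Module A M]
    [AddCommMonoid M'] [FunLike F M M'] [AddMonoidHomClass F M M'] (φ : F) {T : Set M}
    {W : AddSubmonoid M'} (h : ∀ c : A, ∀ t ∈ T, φ (c • t) ∈ W) {z : M}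
    (hz : z ∈ span A T) : φ z ∈ W := by
  -- `φ` is only additive, so the induction has to carry along all scalar multiples of `z`
  suffices ∀ c : A, φ (c • z) ∈ W by simpa using this 1
  induction hz using span_induction with
  | mem t ht => exact fun c => h c t ht
  | zero => simp
  | add x y _ _ hx hy => exact fun c => by rw [smul_add, map_add]; exact add_mem (hx c) (hy c)
  | smul a x _ hx => exact fun c => by rw [smul_smul]; exact hx (c * a)

namespace Finset

variable {α : Type*} [CommMonoid α]

theorem exists_prod_pow_eq_of_mem_pow [DecidableEq α] {s : Finset α} {d : ℕ} {u : α}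
    (hu : u ∈ (s : Set α) ^ d) :
    ∃ c : α → ℕ, ∑ x ∈ s, c x = d ∧ ∏ x ∈ s, x ^ c x = u := by
  induction d generalizing u with
  | zero => exact ⟨0, by simp_all⟩
  | succ d ih =>
    obtain ⟨v, hv, x, hx, rfl⟩ := Set.mem_mul.mp (pow_succ (s : Set α) d ▸ hu)
    obtain ⟨c, hc, rfl⟩ := ih hv
    refine ⟨c + Pi.single x 1, ?_, ?_⟩
    · simp [sum_add_distrib, hc, sum_pi_single', mem_coe.mp hx]
    · simp only [Pi.add_apply, pow_add, prod_mul_distrib]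
      congr 1
      rw [prod_eq_single_of_mem x (mem_coe.mp hx) fun y _ hy => by simp [hy]]
      simp

theorem prod_pow_mem_pow (s : Finset α) (c : α → ℕ) :
    ∏ x ∈ s, x ^ c x ∈ (s : Set α) ^ ∑ x ∈ s, c x := by
  rw [← prod_pow_eq_pow_sum]
  exact Set.finsetProd_mem_finsetProd _ _ _ fun x hx => Set.pow_mem_pow hx

theorem exists_eq_pow_mul_of_mem_pow {s : Finset α} (hs : 1 ∈ s) {Q d : ℕ} (hQ : 0 < Q)
    {u : α} (hu : u ∈ (s : Set α) ^ d) :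
    ∃ v ∈ (s : Set α) ^ (d / Q), ∃ w ∈ (s : Set α) ^ (s.card * Q), u = v ^ Q * w := by
  classical
  obtain ⟨c, rfl, rfl⟩ := exists_prod_pow_eq_of_mem_pow hu
  refine ⟨_, Set.pow_subset_pow_right (mem_coe.2 hs) ?_ (prod_pow_mem_pow s fun x => c x / Q),
    _, Set.pow_subset_pow_right (mem_coe.2 hs) ?_ (prod_pow_mem_pow s fun x => c x % Q), ?_⟩
  · rw [Nat.le_div_iff_mul_le hQ, sum_mul]
    exact sum_le_sum fun x _ => Nat.div_mul_le_self _ _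
  · simpa using sum_le_card_nsmul s _ Q fun x _ => (Nat.mod_lt _ hQ).le
  · rw [← prod_pow, ← prod_mul_distrib]
    exact prod_congr rfl fun x _ => by rw [← pow_mul, ← pow_add, mul_comm, Nat.div_add_mod]

theorem finite_coe_pow_smul {β : Type*} [SMul α β] (s : Finset α) {X : Set β} (hX : X.Finite)
    (d : ℕ) : ((s : Set α) ^ d • X).Finite := by
  classical
  exact (coe_pow s d ▸ (s ^ d).finite_toSet).smul hX

end Finset

section Monomials

variable {k R : Type*} [CommRing k] [CommRing R] [Algebra k R] {s : Finset R}

theorem exists_mem_span_pow (hs : 1 ∈ s) (hgen : Algebra.adjoin k (s : Set R) = ⊤) (r : R) :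
    ∃ d, r ∈ span k ((s : Set R) ^ d) := by
  have hr : r ∈ span k (Submonoid.closure (s : Set R) : Set R) := by
    rw [← Algebra.adjoin_eq_span, hgen]; trivial
  induction hr using span_induction with
  | mem u hu =>
    obtain ⟨d, hd⟩ : ∃ d, u ∈ (s : Set R) ^ d := by
      induction hu using Submonoid.closure_induction with
      | mem x hx => exact ⟨1, by simpa using hx⟩
      | one => exact ⟨0, by simp⟩
      | mul x y _ _ hx hy =>
        obtain ⟨a, ha⟩ := hx
        obtain ⟨b, hb⟩ := hy
        exact ⟨a + b, pow_add (s : Set R) a b ▸ Set.mul_mem_mul ha hb⟩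
    exact ⟨d, subset_span hd⟩
  | zero => exact ⟨0, zero_mem _⟩
  | add x y _ _ hx hy =>
    obtain ⟨a, ha⟩ := hx
    obtain ⟨b, hb⟩ := hy
    exact ⟨max a b, add_mem (span_mono (Set.pow_subset_pow_right (by simpa) (le_max_left a b)) ha)
      (span_mono (Set.pow_subset_pow_right (by simpa) (le_max_right a b)) hb)⟩
  | smul c x _ hx => exact hx.imp fun d hd => smul_mem _ c hd

theorem mem_closure_pow_mul_of_mem_span {Q : ℕ} (hQ : 0 < Q) (hs : 1 ∈ s) {B : Finset k}
    (hB : SpansOverPowers Q B) {d : ℕ} {r : R} (hr : r ∈ span k ((s : Set R) ^ d)) :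
    r ∈ AddSubmonoid.closure (Set.image2 (fun a t => a ^ Q * t) (span k ((s : Set R) ^ (d / Q)))
      (span k ((s : Set R) ^ (s.card * Q)))) := by
  refine map_mem_of_mem_span (AddMonoidHom.id R) (fun c u hu => ?_) hr
  obtain ⟨v, hv, w, hw, rfl⟩ := Finset.exists_eq_pow_mul_of_mem_pow hs hQ hu
  obtain ⟨g, rfl⟩ := hB c
  have : (∑ b ∈ B, g b ^ Q * b) • (v ^ Q * w) = ∑ b ∈ B, (g b • v) ^ Q * (b • w) := by
    rw [Finset.sum_smul]
    refine Finset.sum_congr rfl fun b _ => ?_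
    simp only [Algebra.smul_def, map_mul, map_pow]
    ring
  rw [AddMonoidHom.id_apply, this]
  exact sum_mem fun b _ => AddSubmonoid.subset_closure
    (Set.mem_image2_of_mem (smul_mem _ _ (subset_span hv)) (smul_mem _ _ (subset_span hw)))

end Monomials

section DegreeFiltration

variable {k R M : Type*} [CommRing k] [CommRing R] [AddCommMonoid M] [Module R M] [Module k M]

variable (k) in
def degreeFiltration (s : Finset R) (X : Set M) (d : ℕ) : Submodule k M :=
  span k ((s : Set R) ^ d • X)

variable {s : Finset R} {X : Set M}

theorem degreeFiltration_mono (hs : 1 ∈ s) : Monotone (degreeFiltration k s X) := fun _ _ h =>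
  span_mono (Set.smul_subset_smul_right (Set.pow_subset_pow_right (by simpa) h))

theorem subset_degreeFiltration_zero : X ⊆ degreeFiltration k s X 0 := fun x hx =>
  subset_span (by simpa using hx)

variable [Algebra k R] [IsScalarTower k R M]

theorem smul_mem_degreeFiltration {a b : ℕ} {r : R} (hr : r ∈ span k ((s : Set R) ^ a)) {z : M}
    (hz : z ∈ degreeFiltration k s X b) : r • z ∈ degreeFiltration k s X (a + b) := by
  induction hz using span_induction with
  | mem z hz =>
    obtain ⟨u, hu, x, hx, rfl⟩ := hz
    have hru : r * u ∈ span k ((s : Set R) ^ (a + b)) := by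
      rw [pow_add, ← span_mul_span]
      exact mul_mem_mul hr (subset_span hu)
    rw [smul_smul]
    exact smul_mem_span_smul_of_mem hru hx
  | zero => simp
  | add x y _ _ hx hy => rw [smul_add]; exact add_mem hx hy
  | smul c x _ hx => rw [smul_comm]; exact smul_mem _ c hx

theorem pow_smul_mem_degreeFiltration {δ b : ℕ} {f : R} (hf : f ∈ span k ((s : Set R) ^ δ))
    {z : M} (hz : z ∈ degreeFiltration k s X b) (n : ℕ) :
    f ^ n • z ∈ degreeFiltration k s X (n * δ + b) := by
  induction n with
  | zero => simpa using hz
  | succ n ih =>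
    rw [pow_succ', mul_smul, show (n + 1) * δ + b = δ + (n * δ + b) by ring]
    exact smul_mem_degreeFiltration hf ih

theorem exists_mem_degreeFiltration (hs : 1 ∈ s) (hgen : Algebra.adjoin k (s : Set R) = ⊤)
    (hX : span R X = ⊤) (z : M) : ∃ d, z ∈ degreeFiltration k s X d := by
  induction (hX ▸ mem_top : z ∈ span R X) using span_induction with
  | mem x hx => exact ⟨0, subset_degreeFiltration_zero hx⟩
  | zero => exact ⟨0, zero_mem _⟩
  | add x y _ _ hx hy =>
    obtain ⟨a, ha⟩ := hx
    obtain ⟨b, hb⟩ := hy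
    exact ⟨max a b, add_mem (degreeFiltration_mono hs (le_max_left a b) ha)
      (degreeFiltration_mono hs (le_max_right a b) hb)⟩
  | smul r x _ hx =>
    obtain ⟨a, ha⟩ := exists_mem_span_pow hs hgen r
    obtain ⟨b, hb⟩ := hx
    exact ⟨a + b, smul_mem_degreeFiltration ha hb⟩

theorem exists_span_le_degreeFiltration (hs : 1 ∈ s) (hgen : Algebra.adjoin k (s : Set R) = ⊤)
    (hX : span R X = ⊤) {T : Set M} (hT : T.Finite) :
    ∃ c, span k T ≤ degreeFiltration k s X c := by
  choose d hd using exists_mem_degreeFiltration hs hgen hX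
  obtain ⟨c, hc⟩ := (hT.image d).bddAbove
  exact ⟨c, span_le.2 fun z hz => degreeFiltration_mono hs (hc ⟨z, hz, rfl⟩) (hd z)⟩

end DegreeFiltration
section Cartier

variable {k R M : Type*} [CommRing R] [AddCommMonoid M] [Module R M]

variable (R) in
def IsCartierMap (Q : ℕ) (φ : AddMonoid.End M) : Prop :=
  ∀ (a : R) (x : M), φ (a ^ Q • x) = a • φ x

namespace IsCartierMap

variable {Q : ℕ} {φ : AddMonoid.End M}

theorem pow (hφ : IsCartierMap R Q φ) (m : ℕ) : IsCartierMap R (Q ^ m) (φ ^ m) := by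
  induction m with
  | zero => intro a x; simp
  | succ m ih =>
    intro a x
    simp only [pow_succ', pow_mul, AddMonoid.End.coe_mul, comp_apply, ih _, hφ _]

theorem restrictScalars [CommRing k] [Algebra k R] [Module k M] [IsScalarTower k R M]
    (hφ : IsCartierMap R Q φ) : IsCartierMap k Q φ := fun c x => by
  rw [← algebraMap_smul R (c ^ Q) x, map_pow, hφ, algebraMap_smul]

def mapSubmodule (hφ : IsCartierMap R Q φ) (P : Submodule R M) : Submodule R M where
  carrier := φ '' P
  add_mem' := by
    rintro _ _ ⟨x, hx, rfl⟩ ⟨y, hy, rfl⟩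
    exact ⟨x + y, add_mem hx hy, map_add φ x y⟩
  zero_mem' := ⟨0, zero_mem P, map_zero φ⟩
  smul_mem' := by
    rintro a _ ⟨x, hx, rfl⟩
    exact ⟨a ^ Q • x, P.smul_mem _ hx, hφ a x⟩

theorem coe_mapSubmodule (hφ : IsCartierMap R Q φ) (P : Submodule R M) :
    (hφ.mapSubmodule P : Set M) = φ '' P :=
  rfl

theorem map_mem_span_image_smul (hφ : IsCartierMap R Q φ) {B : Finset R}
    (hB : SpansOverPowers Q B) {T : Set M} {z : M}
    (hz : z ∈ span R T) : φ z ∈ span R (φ '' ((B : Set R) • T)) := by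
  refine map_mem_of_mem_span φ (fun c t ht => ?_) hz
  obtain ⟨g, rfl⟩ := hB c
  rw [Finset.sum_smul, map_sum]
  refine sum_mem fun b hb => ?_
  rw [mul_smul, hφ]
  exact smul_mem _ _ (subset_span ⟨b • t, Set.smul_mem_smul hb ht, rfl⟩)

variable [CommRing k] [Algebra k R] {B : Finset k} {s : Finset R}

theorem mapSubmodule_span_le_span_inter (hφ : IsCartierMap R Q φ) (hQ : 0 < Q)
    (hB : SpansOverPowers Q B) (hs : 1 ∈ s) (hgen : Algebra.adjoin k (s : Set R) = ⊤)
    {Y V : Set M}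
    (hV : ∀ t ∈ span k ((s : Set R) ^ (s.card * Q)), ∀ y ∈ Y, φ (t • y) ∈ V) :
    hφ.mapSubmodule (span R Y) ≤ span R (hφ.mapSubmodule (span R Y) ∩ V) := by
  rintro _ ⟨z, hz, rfl⟩
  refine map_mem_of_mem_span φ (fun r y hy => ?_) hz
  obtain ⟨d, hd⟩ := exists_mem_span_pow hs hgen r
  have hr := mem_closure_pow_mul_of_mem_span hQ hs hB hd
  clear hd
  induction hr using AddSubmonoid.closure_induction with
  | mem r hr =>
    obtain ⟨a, -, t, ht, rfl⟩ := hr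
    rw [mul_smul, hφ]
    have hty : φ (t • y) ∈ hφ.mapSubmodule (span R Y) := ⟨t • y, smul_mem _ t (subset_span hy), rfl⟩
    exact smul_mem _ a (subset_span ⟨hty, hV t ht y hy⟩)
  | zero => simp
  | add r r' _ _ h h' => rw [add_smul, map_add]; exact add_mem h h'

variable [Module k M] [IsScalarTower k R M]

theorem exists_mapsTo_degreeFiltration (hφ : IsCartierMap R Q φ) (hQ : 0 < Q)
    (hB : SpansOverPowers Q B) (hs : 1 ∈ s) (hgen : Algebra.adjoin k (s : Set R) = ⊤)
    {X : Set M} (hXfin : X.Finite) (hX : span R X = ⊤) :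
    ∃ c, ∀ d,
      Set.MapsTo φ (degreeFiltration k s X d) (degreeFiltration k s X (d / Q + c)) := by
  have hfin : (φ '' ((B : Set k) • ((s : Set R) ^ (s.card * Q) • X))).Finite :=
    (B.finite_toSet.smul (s.finite_coe_pow_smul hXfin _)).image φ
  obtain ⟨c, hc⟩ := exists_span_le_degreeFiltration hs hgen hX hfin
  have hbase : ∀ t ∈ span k ((s : Set R) ^ (s.card * Q)), ∀ x ∈ X,
      φ (t • x) ∈ degreeFiltration k s X c := fun t ht x hx =>
    hc (hφ.restrictScalars.map_mem_span_image_smul hB (smul_mem_span_smul_of_mem ht hx))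
  refine ⟨c, fun d z hz => map_mem_of_mem_span φ (fun c' _ hux => ?_) hz⟩
  obtain ⟨u, hu, x, hx, rfl⟩ := hux
  rw [← smul_assoc]
  have hr := mem_closure_pow_mul_of_mem_span hQ hs hB (smul_mem _ c' (subset_span hu))
  generalize c' • u = r at hr
  induction hr using AddSubmonoid.closure_induction with
  | mem r hr =>
    obtain ⟨a, ha, t, ht, rfl⟩ := hr
    rw [mul_smul, hφ]
    exact smul_mem_degreeFiltration ha (hbase t ht x hx)
  | zero => simp
  | add r r' _ _ h h' => rw [add_smul, map_add]; exact add_mem h h'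

end IsCartierMap

end Cartier

theorem IsCartierMap.ncard_setOf_image_ne_le_finrank {k R M : Type*} [Field k] [CommRing R]
    [Algebra k R] [AddCommGroup M] [Module R M] [Module k M] [IsScalarTower k R M] {Q : ℕ}
    {φ : AddMonoid.End M} (hφ : IsCartierMap R Q φ) (hQ : 0 < Q) {B : Finset k}
    (hB : SpansOverPowers Q B) {s : Finset R} (hs : 1 ∈ s)
    (hgen : Algebra.adjoin k (s : Set R) = ⊤) (f : R) (Y : Set M) (V : Submodule k M)
    [FiniteDimensional k V]
    (hV : ∀ n < Q, ∀ t ∈ span k ((s : Set R) ^ (s.card * Q)), ∀ y ∈ Y,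
      φ (t • f ^ n • y) ∈ V) :
    {n | n < Q ∧
      φ '' (f ^ n • (span R Y : Set M)) ≠ φ '' (f ^ (n + 1) • (span R Y : Set M))}.ncard ≤
      Module.finrank k V := by
  set S : ℕ → Submodule R M := fun n => hφ.mapSubmodule (f ^ n • span R Y)
  have hS : ∀ n, (S n : Set M) = φ '' (f ^ n • (span R Y : Set M)) := fun n => by
    simp [S, IsCartierMap.coe_mapSubmodule, coe_pointwise_smul]
  have hSanti : Antitone S := antitone_nat_of_succ_le fun n => by
    rw [← SetLike.coe_subset_coe, hS, hS, pow_succ', mul_smul]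
    exact Set.image_mono (smul_le_self_of_tower f (f ^ n • span R Y))
  have hanti : Antitone fun n => Module.finrank k ↥((S n).restrictScalars k ⊓ V) :=
    fun a b hab => Submodule.finrank_mono (inf_le_inf_right V (hSanti hab))
  refine (ncard_le_of_antitone hanti ?_).trans (Submodule.finrank_mono inf_le_right)
  rintro n ⟨hn, hne⟩
  refine Submodule.finrank_lt_finrank_of_lt
    (lt_of_le_of_ne (inf_le_inf_right V (hSanti n.le_succ)) fun heq => hne ?_)
  have hSV : S n ≤ span R (S n ∩ V) := by
    simpa [S, span_smul] using hφ.mapSubmodule_span_le_span_inter hQ hB hs hgen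
      (Y := f ^ n • Y) (V := V) fun t ht _ ⟨y, hy, hfy⟩ => hfy ▸ hV n hn t ht y hy
  have hle : S n ≤ S (n + 1) := calc
    S n ≤ span R (S n ∩ V) := hSV
    _ = span R (S (n + 1) ∩ V) := by
      rw [← coe_restrictScalars k, ← coe_restrictScalars k (S (n + 1)), ← coe_inf, ← coe_inf,
        heq]
    _ ≤ S (n + 1) := span_le.2 Set.inter_subset_left
  rw [← hS, ← hS, le_antisymm hle (hSanti n.le_succ)]

theorem IsCartierMap.exists_ncard_setOf_image_ne_le {k R M : Type*} [Field k] [CommRing R]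
    [Algebra k R] [AddCommGroup M] [Module R M] [Module k M] [IsScalarTower k R M]
    [Module.Finite R M] {Q : ℕ} {φ : AddMonoid.End M} (hφ : IsCartierMap R Q φ) (hQ : 2 ≤ Q)
    (hk : ∀ m, ∃ B : Finset k, SpansOverPowers (Q ^ m) B) (hR : Algebra.FiniteType k R)
    {N : Submodule R M} (hN : N.FG) (f : R) :
    ∃ L : ℕ, ∀ m : ℕ, {n | n < Q ^ m ∧
      ⇑(φ ^ m) '' (f ^ n • (N : Set M)) ≠ ⇑(φ ^ m) '' (f ^ (n + 1) • (N : Set M))}.ncard ≤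
      L := by
  classical
  obtain ⟨G, hG⟩ := hR.out
  set s : Finset R := insert 1 G
  have hs : 1 ∈ s := Finset.mem_insert_self 1 G
  have hgen : Algebra.adjoin k (s : Set R) = ⊤ := by
    rw [Finset.coe_insert, Algebra.adjoin_insert_one, hG]
  obtain ⟨Y, hY⟩ := Module.Finite.fg_top (R := R) (M := M)
  obtain ⟨Z, rfl⟩ := hN
  have hXfin : ((Y : Set M) ∪ Z).Finite := Y.finite_toSet.union Z.finite_toSet
  have hX : span R ((Y : Set M) ∪ Z) = ⊤ :=
    eq_top_iff.2 (hY ▸ span_mono Set.subset_union_left)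
  set F := degreeFiltration k s ((Y : Set M) ∪ Z)
  obtain ⟨B₁, hB₁⟩ := hk 1
  rw [pow_one] at hB₁
  obtain ⟨c, hc⟩ := hφ.exists_mapsTo_degreeFiltration (by omega) hB₁ hs hgen hXfin hX
  obtain ⟨δ, hδ⟩ := exists_mem_span_pow hs hgen f
  set D := s.card + δ + 2 * c
  have hD : ∀ m, ∀ n ≤ Q ^ m, ∀ t ∈ span k ((s : Set R) ^ (s.card * Q ^ m)),
      ∀ z ∈ (Z : Set M), (φ ^ m) (t • f ^ n • z) ∈ F D := by
    intro m n hn t ht z hz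
    have htfz : t • f ^ n • z ∈ F ((s.card + δ) * Q ^ m) :=
      degreeFiltration_mono hs (by nlinarith) (smul_mem_degreeFiltration ht
        (pow_smul_mem_degreeFiltration hδ (subset_degreeFiltration_zero (.inr hz)) n))
    have hmono : Monotone fun d => (F d : Set M) := fun a b h => degreeFiltration_mono hs h
    simpa [Nat.mul_div_cancel _ (pow_pos (by omega : 0 < Q) m)] using
      mapsTo_iterate_of_mapsTo_div hmono hQ hc m _ htfz
  have _ : FiniteDimensional k (F D) :=
    Module.Finite.span_of_finite k (s.finite_coe_pow_smul hXfin _)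
  refine ⟨Module.finrank k (F D), fun m => ?_⟩
  obtain ⟨B, hB⟩ := hk m
  exact (hφ.pow m).ncard_setOf_image_ne_le_finrank (by positivity) hB hs hgen f Z _
    fun n hn => hD m n hn.le

theorem stmt1 {k R M : Type*} [Field k] [CommRing R] [Algebra k R]
    [AddCommGroup M] [Module R M]
    (p : ℕ) [Fact p.Prime] [CharP k p]
    (hkFF : (frobenius k p).Finite)
    (hRft : Algebra.FiniteType k R)
    (e q : ℕ) (he : 1 ≤ e) (hq : q = p ^ e)
    (C : M → M) (hCadd : ∀ x y : M, C (x + y) = C x + C y)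
    (hCsl : ∀ (a : R) (x : M), C (a ^ q • x) = a • C x)
    [Module.Finite R M] (N : Submodule R M) (hNfg : N.FG) (f : R) :
    ∃ L : ℕ, ∀ m : ℕ, 1 ≤ m →
      {n : ℕ | n < q ^ m ∧ n ∈ nuLevel C f (N : Set M) m}.ncard ≤ L := by
  let _ : Module k M := Module.compHom M (algebraMap k R)
  have _ : IsScalarTower k R M := IsScalarTower.of_algebraMap_smul fun _ _ => rfl
  have hq2 : 2 ≤ q := hq ▸ (Fact.out : p.Prime).two_le.trans (Nat.le_self_pow (by omega) p)
  have hk : ∀ m, ∃ B : Finset k, SpansOverPowers (q ^ m) B := fun m => by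
    rw [hq, ← pow_mul]
    exact hkFF.exists_spansOverPowers (e * m)
  obtain ⟨L, hL⟩ := IsCartierMap.exists_ncard_setOf_image_ne_le (φ := AddMonoidHom.mk' C hCadd)
    hCsl hq2 hk hRft hNfg f
  exact ⟨L, fun m _ => hL m⟩
end

section
/- Let R be a Noetherian F-finite commutative ring of characteristic p, let (M,C) be a q-Cartier module over R with M finitely generated, let N ⊆ M be a finitely generated R-submodule and let f ∈ R. If the pair (N,f) satisfies the boundedness assumption, then the set ν_f(q^∞;N) of ν-invariants of infinite level is a finite subset of ℤ_p. -/
open Pointwise Function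

open Filter

/-! The `q`-semilinearity of `C` gives `C^m(f^{q^m} • S) = f • C^m(S)`, so if `n + q^m` is a
ν-invariant of level `m` then so is `n`. Hence every ν-invariant of infinite level is congruent
mod `q^m` to a ν-invariant of level `m` in `[0, q^m)`. Finitely many distinct `p`-adic integers
are pairwise incongruent mod `q^m` once `m` is large, so at most `L` of them can be
ν-invariants of infinite level. -/

section Cartier

variable {R M : Type*} {q : ℕ} {C : M → M}

theorem iterate_pow_pow_smul [Monoid R] [MulAction R M]
    (hC : ∀ (a : R) (x : M), C (a ^ q • x) = a • C x) (m : ℕ) (a : R) (x : M) :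
    C^[m] (a ^ q ^ m • x) = a • C^[m] x := by
  induction m generalizing a with
  | zero => simp
  | succ m ih =>
    rw [iterate_succ_apply', iterate_succ_apply', pow_succ', pow_mul, ih, hC]

theorem image_iterate_pow_pow_smul [Monoid R] [MulAction R M]
    (hC : ∀ (a : R) (x : M), C (a ^ q • x) = a • C x) (m : ℕ) (a : R) (S : Set M) :
    C^[m] '' (a ^ q ^ m • S) = a • C^[m] '' S := by
  simp only [← Set.image_smul, Set.image_image, iterate_pow_pow_smul hC]

variable [CommRing R] [AddCommGroup M] [Module R M]
  (hC : ∀ (a : R) (x : M), C (a ^ q • x) = a • C x) {f : R} {N : Set M} {m : ℕ}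
include hC

theorem mem_nuLevel_of_add_pow_mem {n : ℕ} (h : n + q ^ m ∈ nuLevel C f N m) :
    n ∈ nuLevel C f N m := by
  intro heq
  apply h
  rw [add_right_comm, pow_add _ _ (q ^ m), pow_add _ (n + 1), mul_comm, mul_smul, mul_comm,
    mul_smul, image_iterate_pow_pow_smul hC, image_iterate_pow_pow_smul hC, heq]

theorem mod_mem_nuLevel {n : ℕ} (h : n ∈ nuLevel C f N m) : n % q ^ m ∈ nuLevel C f N m := by
  rcases Nat.eq_zero_or_pos (q ^ m) with h0 | hpos
  · rwa [h0, Nat.mod_zero]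
  induction n using Nat.strong_induction_on with
  | _ n ih =>
    rcases lt_or_ge n (q ^ m) with hlt | hle
    · rwa [Nat.mod_eq_of_lt hlt]
    · obtain ⟨k, rfl⟩ := Nat.exists_eq_add_of_le' hle
      rw [Nat.add_mod_right]
      exact ih k (by omega) (mem_nuLevel_of_add_pow_mem hC h)

theorem exists_lt_pow_mem_nuLevel_dvd_sub {p : ℕ} [Fact p.Prime] {α : ℤ_[p]}
    (hq : 0 < q) (hα : α ∈ nuInfinite p q C f N) (hm : 1 ≤ m) :
    ∃ n ∈ {n : ℕ | n < q ^ m ∧ n ∈ nuLevel C f N m}, (q : ℤ_[p]) ^ m ∣ α - n := by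
  obtain ⟨n, hn, hdvd⟩ := hα m hm
  refine ⟨n % q ^ m, ⟨Nat.mod_lt n (pow_pos hq m), mod_mem_nuLevel hC hn⟩, ?_⟩
  have hn_eq : (n : ℤ_[p]) = (n % q ^ m : ℕ) + (q : ℤ_[p]) ^ m * (n / q ^ m : ℕ) := by
    exact_mod_cast (Nat.mod_add_div n (q ^ m)).symm
  rw [hn_eq, ← sub_sub, sub_eq_add_neg _ (_ * _)] at hdvd
  simpa using (dvd_add_left (dvd_neg.2 (dvd_mul_right _ _))).1 hdvd

end Cartier

theorem PadicInt.eventually_pow_dvd_sub_imp_eq {p : ℕ} [Fact p.Prime] (t : Finset ℤ_[p]) :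
    ∀ᶠ k in atTop, ∀ x ∈ t, ∀ y ∈ t, (p : ℤ_[p]) ^ k ∣ x - y → x = y := by
  simp only [eventually_all_finset]
  intro x _ y _
  by_cases hxy : x = y
  · exact .of_forall fun _ _ => hxy
  have hsub : x - y ≠ 0 := sub_ne_zero.2 hxy
  refine eventually_atTop.2 ⟨(x - y).valuation + 1, fun k hk hdvd => ?_⟩
  have := (mem_span_pow_iff_le_valuation _ hsub k).1 (Ideal.mem_span_singleton.2 hdvd)
  omega

theorem Finset.card_le_ncard_of_forall_exists_dvd_sub {A : Type*} [CommRing A] {d : A}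
    {t : Finset A} {S : Set ℕ} (hS : S.Finite)
    (hsep : ∀ x ∈ t, ∀ y ∈ t, d ∣ x - y → x = y) (hrep : ∀ x ∈ t, ∃ n ∈ S, d ∣ x - n) :
    t.card ≤ S.ncard := by
  choose! g hgS hg using hrep
  have hinj : Set.InjOn g t := fun x hx y hy hxy =>
    hsep x hx y hy <| by simpa [hxy] using dvd_sub (hg x hx) (hg y hy)
  calc t.card = (g '' t).ncard := by rw [hinj.ncard_image, Set.ncard_coe_finset]
    _ ≤ S.ncard := Set.ncard_le_ncard (Set.image_subset_iff.2 hgS) hS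

theorem stmt2_general {R M : Type*} [CommRing R] [AddCommGroup M] [Module R M]
    (p : ℕ) [Fact p.Prime]
    (e q : ℕ) (he : 1 ≤ e) (hq : q = p ^ e)
    (C : M → M)
    (hCsl : ∀ (a : R) (x : M), C (a ^ q • x) = a • C x)
    (N : Submodule R M) (f : R)
    (hbound : ∃ L : ℕ, ∀ m : ℕ, 1 ≤ m →
      {n : ℕ | n < q ^ m ∧ n ∈ nuLevel C f (N : Set M) m}.ncard ≤ L) :
    (nuInfinite p q C f (N : Set M)).Finite := by
  obtain ⟨L, hL⟩ := hbound
  have hq_pos : 0 < q := hq ▸ pow_pos (Fact.out : p.Prime).pos e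
  have hp_dvd_q : (p : ℤ_[p]) ∣ q :=
    ⟨p ^ (e - 1), by rw [hq, Nat.cast_pow, ← pow_succ', Nat.sub_add_cancel he]⟩
  rw [← Set.not_infinite]
  intro hinf
  obtain ⟨t, hts, htcard⟩ := hinf.exists_subset_card_eq (L + 1)
  obtain ⟨m, hsep, hm⟩ :=
    ((PadicInt.eventually_pow_dvd_sub_imp_eq t).and (eventually_ge_atTop 1)).exists
  have hcard := Finset.card_le_ncard_of_forall_exists_dvd_sub
    ((Set.finite_lt_nat (q ^ m)).subset fun n hn => hn.1)
    (fun x hx y hy hxy => hsep x hx y hy ((pow_dvd_pow_of_dvd hp_dvd_q m).trans hxy))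
    (fun α hα => exists_lt_pow_mem_nuLevel_dvd_sub hCsl hq_pos (hts hα) hm)
  have := hL m hm
  omega

theorem stmt2 {R M : Type*} [CommRing R] [AddCommGroup M] [Module R M]
    (p : ℕ) [Fact p.Prime] [CharP R p] [IsNoetherianRing R]
    (hFF : (frobenius R p).Finite)
    (e q : ℕ) (he : 1 ≤ e) (hq : q = p ^ e)
    (C : M → M) (hCadd : ∀ x y : M, C (x + y) = C x + C y)
    (hCsl : ∀ (a : R) (x : M), C (a ^ q • x) = a • C x)
    [Module.Finite R M] (N : Submodule R M) (hNfg : N.FG) (f : R)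
    (hbound : ∃ L : ℕ, ∀ m : ℕ, 1 ≤ m →
      {n : ℕ | n < q ^ m ∧ n ∈ nuLevel C f (N : Set M) m}.ncard ≤ L) :
    (nuInfinite p q C f (N : Set M)).Finite :=
  stmt2_general p e q he hq C hCsl N f hbound
end

section
/- Define T : ℤ_p → ℤ_p by T(α) = (α − i)/q, where i is the unique integer with 0 ≤ i < q and α − i ∈ q ℤ_p. Let R be a Noetherian F-finite commutative ring of characteristic p, let (M,C) be a q-Cartier module over R, let N ⊆ M be an R-submodule and let f ∈ R. Then: (1) for every α ∈ ν_f(q^∞;N) one has T(α) ∈ ν_f(q^∞;C(N)); (2) the map T restricts to a surjection from ν_f(q^∞;N) onto ν_f(q^∞;C(N)), i.e., every β ∈ ν_f(q^∞;C(N)) equals T(α) for some α ∈ ν_f(q^∞;N). -/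
open Pointwise Function

/-- `β = T α` for the shift map `T : ℤ_p → ℤ_p`, `T(α) = (α - i)/q` where `i` is the unique
integer with `0 ≤ i < q` and `α - i ∈ q ℤ_p`; equivalently `α = q β + i` for some `0 ≤ i < q`. -/
def IsTShift (p : ℕ) [Fact p.Prime] (q : ℕ) (α β : ℤ_[p]) : Prop :=
  ∃ i : ℕ, i < q ∧ α = (q : ℤ_[p]) * β + (i : ℤ_[p])

/-! Since `C(a^q x) = a C(x)`, the sets `C^{m+1}(f^{qn+j} N)`, `j = 0, …, q`, form a decreasing
chain from `C^m(f^n C(N))` to `C^m(f^{n+1} C(N))`. Hence `n` is a ν-invariant of level `m` of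
`C(N)` iff `qn + i` is one of level `m + 1` of `N` for some digit `0 ≤ i < q`. Passing to
`q`-adic limits gives (1) at once, and (2) after choosing, by pigeonhole, a digit `i` that
occurs at infinitely many levels. -/

theorem Antitone.ne_add_iff_exists_ne_succ {α : Type*} [PartialOrder α] {s : ℕ → α}
    (hs : Antitone s) (a k : ℕ) :
    s a ≠ s (a + k) ↔ ∃ j < k, s (a + j) ≠ s (a + j + 1) := by
  constructor
  · intro hne
    by_contra! hall
    have hconst : ∀ j ≤ k, s a = s (a + j) := by
      intro j hj
      induction j with
      | zero => rfl
      | succ j ih => rw [ih (by omega), hall j (by omega), Nat.add_assoc]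
    exact hne (hconst k le_rfl)
  · rintro ⟨j, hj, hne⟩ heq
    refine hne (le_antisymm ?_ (hs (by omega)))
    calc s (a + j) ≤ s a := hs (by omega)
      _ = s (a + k) := heq
      _ ≤ s (a + j + 1) := hs (by omega)

section CartierModule

variable {R M : Type*} [CommRing R] [AddCommGroup M] [Module R M] {q : ℕ} {C : M → M}

theorem image_pow_smul_eq_smul_image (hCsl : ∀ (a : R) (x : M), C (a ^ q • x) = a • C x)
    (a : R) (S : Set M) : C '' (a ^ q • S) = a • C '' S := by
  simpa only [Set.image_smul] using Set.image_comm (hCsl a)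

theorem image_iterate_succ_pow_mul_smul (hCsl : ∀ (a : R) (x : M), C (a ^ q • x) = a • C x)
    (f : R) (S : Set M) (m n : ℕ) :
    C^[m + 1] '' (f ^ (q * n) • S) = C^[m] '' (f ^ n • C '' S) := by
  rw [mul_comm, pow_mul, iterate_succ, Set.image_comp, image_pow_smul_eq_smul_image hCsl]

theorem antitone_image_pow_smul (g : M → M) (f : R) (N : Submodule R M) :
    Antitone fun k : ℕ ↦ g '' (f ^ k • (N : Set M)) := by
  intro a b hab
  refine Set.image_mono (Set.smul_set_subset_iff.2 fun x hx ↦ ?_)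
  rw [← Nat.add_sub_cancel' hab, pow_add, mul_smul]
  exact Set.smul_mem_smul_set (N.smul_mem _ hx)

theorem nuLevel_antitone (C : M → M) (f : R) (S : Set M) : Antitone (nuLevel C f S) := by
  intro m m' hm n hn heq
  obtain ⟨k, rfl⟩ := Nat.exists_eq_add_of_le hm
  apply hn
  rw [add_comm, iterate_add, Set.image_comp, Set.image_comp, heq]

theorem mem_nuLevel_image_iff (hCsl : ∀ (a : R) (x : M), C (a ^ q • x) = a • C x)
    (f : R) (N : Submodule R M) (m n : ℕ) :
    n ∈ nuLevel C f (C '' (N : Set M)) m ↔ ∃ i < q, q * n + i ∈ nuLevel C f N (m + 1) := by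
  have hdecomp := image_iterate_succ_pow_mul_smul hCsl f (N : Set M) m
  have hends : n ∈ nuLevel C f (C '' (N : Set M)) m ↔
      C^[m + 1] '' (f ^ (q * n) • (N : Set M)) ≠ C^[m + 1] '' (f ^ (q * n + q) • (N : Set M)) := by
    rw [← mul_add_one, hdecomp, hdecomp]
    rfl
  rw [hends, (antitone_image_pow_smul C^[m + 1] f N).ne_add_iff_exists_ne_succ]
  rfl

end CartierModule

theorem PadicInt.exists_eq_mul_add_of_dvd_sub {p : ℕ} [Fact p.Prime] {e q n i : ℕ}
    (hq : q = p ^ e) (hi : i < q) (h : (q : ℤ_[p]) ∣ (n : ℤ_[p]) - (i : ℤ_[p])) :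
    ∃ n', n = q * n' + i := by
  subst hq
  have hmod : i ≡ n [MOD p ^ e] := by
    rw [Nat.modEq_iff_dvd, Nat.cast_pow, ← PadicInt.pow_p_dvd_int_iff]
    simpa using h
  refine ⟨n / p ^ e, ?_⟩
  rw [← Nat.mod_eq_of_lt hi, hmod, Nat.div_add_mod]

theorem natCast_mul_add_sub_natCast_mul_add {A : Type*} [CommRing A] (q i n : ℕ) (β : A) :
    (q : A) * β + i - ((q * n + i : ℕ) : A) = q * (β - n) := by
  push_cast
  ring

section InfiniteLevel

variable {R M : Type*} [CommRing R] [AddCommGroup M] [Module R M] {p : ℕ} [Fact p.Prime]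
  {e q : ℕ} {C : M → M}

theorem mem_nuInfinite_image_of_isTShift (hq : q = p ^ e)
    (hCsl : ∀ (a : R) (x : M), C (a ^ q • x) = a • C x) {f : R} {N : Submodule R M}
    {α β : ℤ_[p]} (hα : α ∈ nuInfinite p q C f (N : Set M)) (hαβ : IsTShift p q α β) :
    β ∈ nuInfinite p q C f (C '' (N : Set M)) := by
  obtain ⟨i, hi, rfl⟩ := hαβ
  intro m _
  obtain ⟨n, hn, hdvd⟩ := hα (m + 1) (by omega)
  have hni : (q : ℤ_[p]) ∣ (n : ℤ_[p]) - i := by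
    have h := (dvd_pow_self (q : ℤ_[p]) m.succ_ne_zero).trans hdvd
    convert (dvd_mul_right (q : ℤ_[p]) β).sub h using 1
    ring
  obtain ⟨n', rfl⟩ := PadicInt.exists_eq_mul_add_of_dvd_sub hq hi hni
  refine ⟨n', (mem_nuLevel_image_iff hCsl f N m n').2 ⟨i, hi, hn⟩, ?_⟩
  have hq0 : (q : ℤ_[p]) ≠ 0 := by
    subst hq
    exact_mod_cast pow_ne_zero e (Fact.out : p.Prime).ne_zero
  rwa [natCast_mul_add_sub_natCast_mul_add, pow_succ', mul_dvd_mul_iff_left hq0] at hdvd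

theorem exists_isTShift_of_mem_nuInfinite_image
    (hCsl : ∀ (a : R) (x : M), C (a ^ q • x) = a • C x) {f : R} {N : Submodule R M}
    {β : ℤ_[p]} (hβ : β ∈ nuInfinite p q C f (C '' (N : Set M))) :
    ∃ α ∈ nuInfinite p q C f (N : Set M), IsTShift p q α β := by
  choose n hn hdvd using fun m : ℕ ↦ hβ (m + 1) (by omega)
  choose i hi hni using fun m : ℕ ↦ (mem_nuLevel_image_iff hCsl f N (m + 1) (n m)).1 (hn m)
  obtain ⟨⟨i₀, hi₀⟩, hfiber⟩ := Finite.exists_infinite_fiber fun m ↦ (⟨i m, hi m⟩ : Fin q)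
  refine ⟨q * β + i₀, fun m _ ↦ ?_, i₀, hi₀, rfl⟩
  obtain ⟨m', hm'i, hmm'⟩ := (Set.infinite_coe_iff.1 hfiber).exists_gt m
  obtain rfl : i m' = i₀ := congrArg Fin.val hm'i
  refine ⟨q * n m' + i m', nuLevel_antitone C f _ (by omega) (hni m'), ?_⟩
  rw [natCast_mul_add_sub_natCast_mul_add]
  exact (pow_dvd_pow _ (by omega : m ≤ m' + 2)).trans
    (pow_succ' (q : ℤ_[p]) (m' + 1) ▸ mul_dvd_mul_left _ (hdvd m'))

end InfiniteLevel

theorem stmt4_general {R M : Type*} [CommRing R] [AddCommGroup M] [Module R M]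
    (p : ℕ) [Fact p.Prime]
    (e q : ℕ) (hq : q = p ^ e)
    (C : M → M)
    (hCsl : ∀ (a : R) (x : M), C (a ^ q • x) = a • C x)
    (N : Submodule R M) (f : R) :
    -- (1) `T` maps `ν_f(q^∞; N)` into `ν_f(q^∞; C(N))`
    (∀ α ∈ nuInfinite p q C f (N : Set M), ∀ β : ℤ_[p], IsTShift p q α β →
      β ∈ nuInfinite p q C f (C '' (N : Set M))) ∧
    -- (2) `T` restricts to a surjection `ν_f(q^∞; N) → ν_f(q^∞; C(N))`
    (∀ β ∈ nuInfinite p q C f (C '' (N : Set M)),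
      ∃ α ∈ nuInfinite p q C f (N : Set M), IsTShift p q α β) :=
  ⟨fun _ hα _ hαβ ↦ mem_nuInfinite_image_of_isTShift hq hCsl hα hαβ,
    fun _ hβ ↦ exists_isTShift_of_mem_nuInfinite_image hCsl hβ⟩

theorem stmt4 {R M : Type*} [CommRing R] [AddCommGroup M] [Module R M]
    (p : ℕ) [Fact p.Prime] [CharP R p] [IsNoetherianRing R]
    (hFF : (frobenius R p).Finite)
    (e q : ℕ) (he : 1 ≤ e) (hq : q = p ^ e)
    (C : M → M) (hCadd : ∀ x y : M, C (x + y) = C x + C y)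
    (hCsl : ∀ (a : R) (x : M), C (a ^ q • x) = a • C x)
    (N : Submodule R M) (f : R) :
    -- (1) `T` maps `ν_f(q^∞; N)` into `ν_f(q^∞; C(N))`
    (∀ α ∈ nuInfinite p q C f (N : Set M), ∀ β : ℤ_[p], IsTShift p q α β →
      β ∈ nuInfinite p q C f (C '' (N : Set M))) ∧
    -- (2) `T` restricts to a surjection `ν_f(q^∞; N) → ν_f(q^∞; C(N))`
    (∀ β ∈ nuInfinite p q C f (C '' (N : Set M)),
      ∃ α ∈ nuInfinite p q C f (N : Set M), IsTShift p q α β) :=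
  stmt4_general p e q hq C hCsl N f
end

section
/- Let R be a Noetherian F-finite commutative ring of characteristic p, let (M,C) be a q-Cartier module over R with M finitely generated, let f ∈ R, and let N ⊆ M be a finitely generated R-submodule such that C^j(N) = N for some integer j ≥ 1. Then for every α ∈ ν_f(q^∞;N) and every integer n ≥ 1, there exists an integer m_n with 0 ≤ m_n ≤ q^{nj} − 1 such that q^{nj}·α + m_n ∈ ν_f(q^∞;N) (the operations taken in ℤ_p). -/
open Pointwise Function

section Aux

variable {R M : Type*} [CommRing R] [AddCommGroup M] [Module R M]

lemma iterC (q : ℕ) (C : M → M) (hCsl : ∀ (a : R) (x : M), C (a ^ q • x) = a • C x) :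
    ∀ (k : ℕ) (b : R) (x : M), C^[k] (b ^ q ^ k • x) = b • C^[k] x := by
  intro k
  induction k with
  | zero => intro b x; simp
  | succ k ih =>
    intro b x
    have h1 : b ^ q ^ (k + 1) = (b ^ q ^ k) ^ q := by
      rw [← pow_mul, pow_succ]
    rw [Function.iterate_succ_apply, Function.iterate_succ_apply, h1, hCsl, ih]

lemma iterC_image (q : ℕ) (C : M → M) (hCsl : ∀ (a : R) (x : M), C (a ^ q • x) = a • C x)
    (k : ℕ) (b : R) (S : Set M) :
    C^[k] '' (b ^ q ^ k • S) = b • (C^[k] '' S) := by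
  ext y
  simp only [Set.mem_image, Set.mem_smul_set]
  constructor
  · rintro ⟨x, ⟨s, hs, rfl⟩, rfl⟩
    exact ⟨C^[k] s, ⟨s, hs, rfl⟩, (iterC q C hCsl k b s).symm⟩
  · rintro ⟨z, ⟨s, hs, rfl⟩, rfl⟩
    exact ⟨b ^ q ^ k • s, ⟨s, hs, rfl⟩, iterC q C hCsl k b s⟩

lemma chain_eq {α : Type*} (g : ℕ → α) : ∀ K, (∀ r, r < K → g r = g (r + 1)) → g 0 = g K := by
  intro K
  induction K with
  | zero => intro _; rfl
  | succ K ih =>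
    intro h
    rw [ih fun r hr => h r (hr.trans (Nat.lt_succ_self K)), h K (Nat.lt_succ_self K)]

lemma nuLevel_anti (C : M → M) (f : R) (N : Set M) {m m' : ℕ} (hm : m' ≤ m)
    {n : ℕ} (hn : n ∈ nuLevel C f N m) : n ∈ nuLevel C f N m' := by
  by_contra h
  simp only [nuLevel, Set.mem_setOf_eq, not_not] at h
  exact hn (by
    obtain ⟨k, rfl⟩ := Nat.exists_eq_add_of_le hm
    rw [add_comm, Function.iterate_add, Set.image_comp, Set.image_comp, h])

lemma iter_fix (C : M → M) (N : Set M) (j : ℕ) (h : C^[j] '' N = N) :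
    ∀ n, C^[n * j] '' N = N := by
  intro n
  induction n with
  | zero => simp
  | succ n ih => rw [Nat.succ_mul, Function.iterate_add, Set.image_comp, h, ih]

lemma key_step (q : ℕ) (C : M → M) (hCsl : ∀ (a : R) (x : M), C (a ^ q • x) = a • C x)
    (f : R) (N : Set M) (k : ℕ) (hCk : C^[k] '' N = N)
    {m a : ℕ} (ha : a ∈ nuLevel C f N m) :
    ∃ r, r < q ^ k ∧ q ^ k * a + r ∈ nuLevel C f N (m + k) := by
  set g : ℕ → Set M := fun r => C^[m + k] '' (f ^ (q ^ k * a + r) • N) with hg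
  have hgen : ∀ r, g r = C^[m] '' (f ^ a • (C^[k] '' (f ^ r • N))) := by
    intro r
    have h1 : f ^ (q ^ k * a + r) • N = (f ^ a) ^ q ^ k • (f ^ r • N) := by
      rw [← mul_smul, ← pow_mul, ← pow_add, mul_comm a (q ^ k)]
    rw [hg]
    simp only
    rw [Function.iterate_add, Set.image_comp, h1,
      iterC_image q C hCsl k (f ^ a) (f ^ r • N)]
  have hg0 : g 0 = C^[m] '' (f ^ a • N) := by
    rw [hgen 0, pow_zero, one_smul, hCk]
  have hgK : g (q ^ k) = C^[m] '' (f ^ (a + 1) • N) := by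
    rw [hgen (q ^ k), iterC_image q C hCsl k f N, hCk, ← mul_smul, ← pow_succ]
  by_contra hc
  push_neg at hc
  have hc' : ∀ r, r < q ^ k → g r = g (r + 1) := by
    intro r hr
    have := hc r hr
    simp only [nuLevel, Set.mem_setOf_eq, not_not] at this
    have harr : q ^ k * a + r + 1 = q ^ k * a + (r + 1) := by omega
    rw [hg]
    simp only
    rw [← harr]
    exact this
  have h0 := chain_eq g (q ^ k) hc'
  rw [hg0, hgK] at h0
  exact ha h0

end Aux

theorem stmt5 {R M : Type*} [CommRing R] [AddCommGroup M] [Module R M]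
    (p : ℕ) [Fact p.Prime] [CharP R p] [IsNoetherianRing R]
    (hFF : (frobenius R p).Finite)
    (e q : ℕ) (he : 1 ≤ e) (hq : q = p ^ e)
    (C : M → M) (hCadd : ∀ x y : M, C (x + y) = C x + C y)
    (hCsl : ∀ (a : R) (x : M), C (a ^ q • x) = a • C x)
    [Module.Finite R M] (f : R) (N : Submodule R M) (hNfg : N.FG)
    (j : ℕ) (hj : 1 ≤ j) (hCjN : C^[j] '' (N : Set M) = (N : Set M)) :
    ∀ α ∈ nuInfinite p q C f (N : Set M), ∀ n : ℕ, 1 ≤ n →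
      ∃ mn : ℕ, mn ≤ q ^ (n * j) - 1 ∧
        (q : ℤ_[p]) ^ (n * j) * α + (mn : ℤ_[p]) ∈ nuInfinite p q C f (N : Set M) := by
  intro α hα n hn
  simp only [nuInfinite, Set.mem_setOf_eq] at hα
  have hqpos : 0 < q := by subst hq; exact pow_pos (Fact.out : p.Prime).pos e
  have hCk := iter_fix C (N : Set M) j hCjN n
  have choice : ∀ m : ℕ, ∃ nr : ℕ × ℕ, nr.2 < q ^ (n * j) ∧
      q ^ (n * j) * nr.1 + nr.2 ∈ nuLevel C f (N : Set M) (m + 1 + n * j) ∧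
      ((q : ℤ_[p]) ^ (m + 1)) ∣ (α - (nr.1 : ℤ_[p])) := by
    intro m
    obtain ⟨nm, hnm, hdvd⟩ := hα (m + 1) (Nat.le_add_left 1 m)
    obtain ⟨r, hr, hmem⟩ := key_step q C hCsl f (N : Set M) (n * j) hCk hnm
    exact ⟨(nm, r), hr, hmem, hdvd⟩
  choose nr hlt hmem hdvd using choice
  obtain ⟨r, hrinf⟩ :=
    Finite.exists_infinite_fiber (fun m => (⟨(nr m).2, hlt m⟩ : Fin (q ^ (n * j))))
  have hrinf' : (Set.preimage (fun m => (⟨(nr m).2, hlt m⟩ : Fin (q ^ (n * j)))) {r}).Infinite :=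
    Set.infinite_coe_iff.mp hrinf
  refine ⟨r.1, Nat.le_pred_of_lt r.2, ?_⟩
  simp only [nuInfinite, Set.mem_setOf_eq]
  intro m' hm'
  obtain ⟨m, hmmem, hmlt⟩ := hrinf'.exists_notMem_finset (Finset.range (m' + 1))
  rw [Finset.mem_range, not_lt] at hmlt
  have hfm : (nr m).2 = r.1 := by
    have : (⟨(nr m).2, hlt m⟩ : Fin (q ^ (n * j))) = r := by
      simpa [Set.mem_preimage] using hmmem
    exact congrArg Fin.val this
  refine ⟨q ^ (n * j) * (nr m).1 + r.1, ?_, ?_⟩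
  · rw [← hfm]
    exact nuLevel_anti C f _ (by omega) (hmem m)
  · have hcast : ((q ^ (n * j) * (nr m).1 + r.1 : ℕ) : ℤ_[p]) =
        (q : ℤ_[p]) ^ (n * j) * ((nr m).1 : ℤ_[p]) + (r.1 : ℤ_[p]) := by push_cast; ring
    rw [hcast]
    have h1 : (q : ℤ_[p]) ^ (n * j) * α + (r.1 : ℤ_[p]) -
        ((q : ℤ_[p]) ^ (n * j) * ((nr m).1 : ℤ_[p]) + (r.1 : ℤ_[p]))
        = (q : ℤ_[p]) ^ (n * j) * (α - ((nr m).1 : ℤ_[p])) := by ring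
    rw [h1]
    have h2 : (q : ℤ_[p]) ^ (n * j + (m + 1)) ∣
        (q : ℤ_[p]) ^ (n * j) * (α - ((nr m).1 : ℤ_[p])) := by
      rw [pow_add]; exact mul_dvd_mul_left _ (hdvd m)
    exact dvd_trans (pow_dvd_pow _ (by omega)) h2
end

section
/- Let R be a Noetherian F-finite commutative ring of characteristic p, let (M,C) be an F-pure q-Cartier module over R, let f ∈ R and let t ≥ 0 be a real number. Then for every integer m ≥ 0 one has C^m(f^{⌈t q^m⌉} M) ⊆ C^{m+1}(f^{⌈t q^{m+1}⌉} M). Consequently there exists m₀ such that τ(M,f^t) = C^m(f^{⌈t q^m⌉} M) for all m ≥ m₀; in particular τ(M,f^t) is a finitely generated R-submodule of M. -/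
open Pointwise Function

/-- The test module `τ(M, f^t) = ⋃_{m ≥ 0} C^m (f^{⌈t q^m⌉} M)` of an F-pure `q`-Cartier
module `(M, C)` with respect to `f` at level `t ≥ 0`. -/
def testSet {R M : Type*} [CommRing R] [AddCommGroup M] [Module R M]
    (C : M → M) (q : ℕ) (f : R) (t : ℝ) : Set M :=
  ⋃ m : ℕ, C^[m] '' ((f ^ ⌈t * (q : ℝ) ^ m⌉₊) • (Set.univ : Set M))

section Aux

variable {R M : Type*} [CommRing R] [AddCommGroup M] [Module R M]
  (C : M → M) (q : ℕ) (hCadd : ∀ x y : M, C (x + y) = C x + C y)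
  (hCsl : ∀ (a : R) (x : M), C (a ^ q • x) = a • C x)

/-- The image of a submodule under a `q`-Cartier map is a submodule. -/
def cSub (N : Submodule R M) : Submodule R M where
  carrier := C '' N
  add_mem' := by
    rintro _ _ ⟨x, hx, rfl⟩ ⟨y, hy, rfl⟩
    exact ⟨x + y, N.add_mem hx hy, hCadd x y⟩
  zero_mem' := by
    refine ⟨0, N.zero_mem, ?_⟩
    have h := hCadd 0 0
    rw [add_zero] at h
    exact (left_eq_add.mp h)
  smul_mem' := by
    rintro a _ ⟨x, hx, rfl⟩
    exact ⟨a ^ q • x, N.smul_mem _ hx, hCsl a x⟩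

lemma cSub_iter_coe (m : ℕ) (N : Submodule R M) :
    (((cSub C q hCadd hCsl)^[m] N : Submodule R M) : Set M) = C^[m] '' N := by
  induction m with
  | zero => simp
  | succ n ih =>
      rw [Function.iterate_succ_apply']
      have : ((cSub C q hCadd hCsl ((cSub C q hCadd hCsl)^[n] N) : Submodule R M) : Set M)
          = C '' (((cSub C q hCadd hCsl)^[n] N : Submodule R M) : Set M) := rfl
      rw [this, ih, Function.iterate_succ', Set.image_comp]

end Aux

theorem stmt7 {R M : Type*} [CommRing R] [AddCommGroup M] [Module R M]
    (p : ℕ) [Fact p.Prime] [CharP R p] [IsNoetherianRing R]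
    (hFF : (frobenius R p).Finite)
    (e q : ℕ) (he : 1 ≤ e) (hq : q = p ^ e)
    (C : M → M) (hCadd : ∀ x y : M, C (x + y) = C x + C y)
    (hCsl : ∀ (a : R) (x : M), C (a ^ q • x) = a • C x)
    [Module.Finite R M] (hFpure : Function.Surjective C)
    (f : R) (t : ℝ) (ht : 0 ≤ t) :
    -- the chain `C^m(f^{⌈t q^m⌉} M)` is increasing
    (∀ m : ℕ,
        C^[m] '' ((f ^ ⌈t * (q : ℝ) ^ m⌉₊) • (Set.univ : Set M)) ⊆
          C^[m + 1] '' ((f ^ ⌈t * (q : ℝ) ^ (m + 1)⌉₊) • (Set.univ : Set M))) ∧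
    -- consequently `τ(M, f^t)` equals `C^m(f^{⌈t q^m⌉} M)` for all large `m`
    (∃ m₀ : ℕ, ∀ m : ℕ, m₀ ≤ m →
        testSet C q f t = C^[m] '' ((f ^ ⌈t * (q : ℝ) ^ m⌉₊) • (Set.univ : Set M))) ∧
    -- in particular `τ(M, f^t)` is a finitely generated `R`-submodule of `M`
    (∃ S : Submodule R M, S.FG ∧ (S : Set M) = testSet C q f t) := by
  -- notation
  set a : ℕ → ℕ := fun m => ⌈t * (q : ℝ) ^ m⌉₊ with ha
  -- the increasing chain step
  have hqpos : 0 < q := by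
    rw [hq]; exact pow_pos (Fact.out : p.Prime).pos e
  have key : ∀ m : ℕ,
      C^[m] '' ((f ^ a m) • (Set.univ : Set M)) ⊆
        C^[m + 1] '' ((f ^ a (m + 1)) • (Set.univ : Set M)) := by
    intro m
    have hle : a (m + 1) ≤ a m * q := by
      have h0 : a (m + 1) = ⌈t * (q : ℝ) ^ (m + 1)⌉₊ := rfl
      have h0' : a m = ⌈t * (q : ℝ) ^ m⌉₊ := rfl
      rw [h0, h0']
      refine Nat.ceil_le.mpr ?_
      have h1 : t * (q : ℝ) ^ m ≤ (⌈t * (q : ℝ) ^ m⌉₊ : ℝ) := Nat.le_ceil _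
      have hq0 : (0 : ℝ) ≤ (q : ℝ) := Nat.cast_nonneg q
      push_cast
      calc t * (q : ℝ) ^ (m + 1) = (t * (q : ℝ) ^ m) * q := by ring
        _ ≤ (⌈t * (q : ℝ) ^ m⌉₊ : ℝ) * q := mul_le_mul_of_nonneg_right h1 hq0
    rintro _ ⟨_, ⟨y, -, rfl⟩, rfl⟩
    obtain ⟨z, hz⟩ := hFpure y
    refine ⟨f ^ a (m + 1) • (f ^ (a m * q - a (m + 1)) • z),
      ⟨f ^ (a m * q - a (m + 1)) • z, Set.mem_univ _, rfl⟩, ?_⟩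
    rw [Function.iterate_succ_apply]
    congr 1
    have h1 : f ^ a (m + 1) • (f ^ (a m * q - a (m + 1)) • z)
        = (f ^ a m) ^ q • z := by
      rw [smul_smul, ← pow_add, ← pow_mul, Nat.add_sub_cancel' hle]
    rw [h1, hCsl, hz]
  -- the chain as submodules
  set T : ℕ → Submodule R M :=
    fun m => (cSub C q hCadd hCsl)^[m] ((f ^ a m) • (⊤ : Submodule R M)) with hT
  have hTcoe : ∀ m, (T m : Set M) = C^[m] '' ((f ^ a m) • (Set.univ : Set M)) := by
    intro m
    rw [hT, cSub_iter_coe, Submodule.coe_pointwise_smul, Submodule.top_coe]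
  have hTmono : Monotone T := by
    apply monotone_nat_of_le_succ
    intro m
    rw [← SetLike.coe_subset_coe, hTcoe, hTcoe]
    exact key m
  -- Noetherian stabilization
  have hnoeth : IsNoetherian R M := isNoetherian_of_isNoetherianRing_of_finite R M
  obtain ⟨m₀, hm₀⟩ := monotone_stabilizes_iff_noetherian.mpr hnoeth ⟨T, hTmono⟩
  have hunion : ∀ m, m₀ ≤ m → testSet C q f t = (T m : Set M) := by
    intro m hm
    apply Set.Subset.antisymm
    · intro x hx
      rw [testSet] at hx
      obtain ⟨s, ⟨k, rfl⟩, hxs⟩ := hx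
      have : x ∈ (T k : Set M) := by rw [hTcoe]; exact hxs
      rcases le_total k m with h | h
      · exact hTmono h this
      · have hk : T m₀ = T k := hm₀ k (le_trans hm h)
        have hmm : T m₀ = T m := hm₀ m hm
        rw [hmm.symm.trans hk]
        exact this
    · rw [hTcoe]
      exact Set.subset_iUnion
        (fun k => C^[k] '' ((f ^ a k) • (Set.univ : Set M))) m
  refine ⟨key, ⟨m₀, fun m hm => by rw [hunion m hm, hTcoe]⟩,
    ⟨T m₀, IsNoetherian.noetherian _, (hunion m₀ le_rfl).symm⟩⟩
end

section
/- Let R be a Noetherian F-finite commutative ring of characteristic p, let (M,C) be an F-pure q-Cartier module over R and let f ∈ R. Then every right F-jumping exponent lies in ℤ[1/p]: if t ∈ FJN⁺(M,f), then t·q^m is an integer for some m ≥ 0. Equivalently, if t ≥ 0 is a real number with t·q^m ∉ ℤ for all m ≥ 0, then there exists ε > 0 with τ(M,f^{t+ε}) = τ(M,f^t). -/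
open Pointwise Function

/-- The set `FJN⁺(M, f)` of right F-jumping exponents: `t ≥ 0` such that
`τ(M, f^{t+ε}) ⊊ τ(M, f^t)` for every `ε > 0`. -/
def FJNplus {R M : Type*} [CommRing R] [AddCommGroup M] [Module R M]
    (C : M → M) (q : ℕ) (f : R) : Set ℝ :=
  {t | 0 ≤ t ∧ ∀ ε : ℝ, 0 < ε → testSet C q f (t + ε) ⊂ testSet C q f t}

/-!
Write `N_m = C^m(f^{⌈t q^m⌉} M)`. Since `⌈t q^{m+1}⌉ ≤ q ⌈t q^m⌉` and `C` is surjective,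
`N_m = C^{m+1}(f^{q ⌈t q^m⌉} M) ⊆ N_{m+1}`, so the `N_m` form an ascending chain whose union is
`τ(M, f^t)`. As `M` is Noetherian the chain stabilises, so `τ(M, f^t) = N_{m₀}` for some `m₀`.
If `t q^{m₀}` is not an integer, then `t q^{m₀} < ⌈t q^{m₀}⌉ = (t + ε) q^{m₀}` for some `ε > 0`,
whence `τ(M, f^t) = N_{m₀} ⊆ τ(M, f^{t+ε}) ⊆ τ(M, f^t)`.
-/

section CartierImage

variable {R M : Type*} [CommRing R] [AddCommGroup M] [Module R M]
variable {C : M → M} {q : ℕ}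

theorem iterate_cartier_smul (hCsl : ∀ (a : R) (x : M), C (a ^ q • x) = a • C x)
    (m : ℕ) (a : R) (x : M) : C^[m] (a ^ q ^ m • x) = a • C^[m] x := by
  induction m generalizing x with
  | zero => simp
  | succ m ih => rw [iterate_succ_apply, iterate_succ_apply, pow_succ, pow_mul, hCsl, ih]

theorem pow_smul_univ_subset {f : R} {n n' : ℕ} (h : n ≤ n') :
    (f ^ n' • Set.univ : Set M) ⊆ f ^ n • Set.univ := by
  rintro _ ⟨x, -, rfl⟩
  exact ⟨f ^ (n' - n) • x, trivial, by simp only [smul_smul, ← pow_add, Nat.add_sub_cancel' h]⟩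

variable (C q) in
def cartierImage (hCadd : ∀ x y : M, C (x + y) = C x + C y)
    (hCsl : ∀ (a : R) (x : M), C (a ^ q • x) = a • C x) (f : R) (m n : ℕ) : Submodule R M where
  carrier := C^[m] '' ((f ^ n) • (Set.univ : Set M))
  add_mem' := by
    rintro _ _ ⟨_, ⟨x, -, rfl⟩, rfl⟩ ⟨_, ⟨y, -, rfl⟩, rfl⟩
    exact ⟨f ^ n • (x + y), Set.smul_mem_smul_set trivial,
      by rw [smul_add]; exact iterate_map_add (AddMonoidHom.mk' C hCadd) m _ _⟩
  zero_mem' := ⟨f ^ n • 0, Set.smul_mem_smul_set trivial,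
      by rw [smul_zero]; exact iterate_map_zero (AddMonoidHom.mk' C hCadd) m⟩
  smul_mem' := by
    rintro r _ ⟨_, ⟨x, -, rfl⟩, rfl⟩
    exact ⟨f ^ n • (r ^ q ^ m • x), Set.smul_mem_smul_set trivial,
      by rw [smul_comm, iterate_cartier_smul hCsl]⟩

variable {hCadd : ∀ x y : M, C (x + y) = C x + C y}
    {hCsl : ∀ (a : R) (x : M), C (a ^ q • x) = a • C x} {f : R}

theorem cartierImage_antitone {m n n' : ℕ} (h : n ≤ n') :
    cartierImage C q hCadd hCsl f m n' ≤ cartierImage C q hCadd hCsl f m n :=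
  Set.image_mono (pow_smul_univ_subset h)

theorem cartierImage_le_succ (hsurj : Surjective C) {m n n' : ℕ} (h : n' ≤ q * n) :
    cartierImage C q hCadd hCsl f m n ≤ cartierImage C q hCadd hCsl f (m + 1) n' := by
  rintro _ ⟨_, ⟨x, -, rfl⟩, rfl⟩
  obtain ⟨y, rfl⟩ := hsurj x
  refine ⟨f ^ n' • (f ^ (q * n - n') • y), Set.smul_mem_smul_set trivial, ?_⟩
  rw [smul_smul, ← pow_add, Nat.add_sub_cancel' h, mul_comm, pow_mul, iterate_succ_apply,
    hCsl]

end CartierImage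

theorem Nat.ceil_mul_pow_succ_le (t : ℝ) (q m : ℕ) :
    ⌈t * (q : ℝ) ^ (m + 1)⌉₊ ≤ q * ⌈t * (q : ℝ) ^ m⌉₊ := by
  rw [Nat.ceil_le, Nat.cast_mul, pow_succ, ← mul_assoc, mul_comm (q : ℝ)]
  gcongr
  exact Nat.le_ceil _

section TestSet

variable {R M : Type*} [CommRing R] [AddCommGroup M] [Module R M]
variable {C : M → M} {q : ℕ} {hCadd : ∀ x y : M, C (x + y) = C x + C y}
    {hCsl : ∀ (a : R) (x : M), C (a ^ q • x) = a • C x} {f : R}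

theorem testSet_eq_iUnion_cartierImage (t : ℝ) :
    testSet C q f t = ⋃ m, (cartierImage C q hCadd hCsl f m ⌈t * (q : ℝ) ^ m⌉₊ : Set M) :=
  rfl

theorem testSet_anti {s t : ℝ} (h : s ≤ t) : testSet C q f t ⊆ testSet C q f s :=
  Set.iUnion_mono fun _ => Set.image_mono (pow_smul_univ_subset (Nat.ceil_mono (by gcongr)))

theorem monotone_cartierImage_ceil (hsurj : Surjective C) (t : ℝ) :
    Monotone fun m => cartierImage C q hCadd hCsl f m ⌈t * (q : ℝ) ^ m⌉₊ :=
  monotone_nat_of_le_succ fun m => cartierImage_le_succ hsurj (Nat.ceil_mul_pow_succ_le t q m)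

theorem exists_testSet_eq_cartierImage [IsNoetherian R M] (hsurj : Surjective C) (t : ℝ) :
    ∃ m₀, testSet C q f t = cartierImage C q hCadd hCsl f m₀ ⌈t * (q : ℝ) ^ m₀⌉₊ := by
  have hmono := monotone_cartierImage_ceil (hCadd := hCadd) (hCsl := hCsl) (f := f) hsurj t
  obtain ⟨m₀, hm₀⟩ := monotone_stabilizes_iff_noetherian.mpr ‹_› ⟨_, hmono⟩
  refine ⟨m₀, (Set.iUnion_subset fun m => ?_).antisymm (Set.subset_iUnion_of_subset m₀ le_rfl)⟩
  rcases le_total m m₀ with h | h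
  · exact hmono h
  · exact (hm₀ m h).ge

theorem exists_testSet_add_eq [IsNoetherian R M] (hCadd : ∀ x y : M, C (x + y) = C x + C y)
    (hCsl : ∀ (a : R) (x : M), C (a ^ q • x) = a • C x) (hsurj : Surjective C) {t : ℝ}
    (hirr : ∀ (m : ℕ) (k : ℤ), t * (q : ℝ) ^ m ≠ k) :
    ∃ ε > 0, testSet C q f (t + ε) = testSet C q f t := by
  have hq : 0 < (q : ℝ) := q.cast_nonneg.lt_of_ne' fun hq => hirr 1 0 (by simp [hq])
  obtain ⟨m₀, hm₀⟩ := exists_testSet_eq_cartierImage (hCadd := hCadd) (hCsl := hCsl) hsurj t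
  have hlt : t * (q : ℝ) ^ m₀ < ⌈t * (q : ℝ) ^ m₀⌉₊ :=
    (Nat.le_ceil _).lt_of_ne (by exact_mod_cast hirr m₀ ⌈t * (q : ℝ) ^ m₀⌉₊)
  set c := ⌈t * (q : ℝ) ^ m₀⌉₊
  have hpos : 0 < (q : ℝ) ^ m₀ := pow_pos hq m₀
  have hε : 0 < (c - t * (q : ℝ) ^ m₀) / (q : ℝ) ^ m₀ := div_pos (by linarith) hpos
  refine ⟨_, hε, (testSet_anti (le_add_of_nonneg_right hε.le)).antisymm ?_⟩
  have hceil : ⌈(t + (c - t * (q : ℝ) ^ m₀) / (q : ℝ) ^ m₀) * (q : ℝ) ^ m₀⌉₊ = c := by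
    rw [add_mul, div_mul_cancel₀ _ hpos.ne', add_sub_cancel, Nat.ceil_natCast]
  rw [hm₀, testSet_eq_iUnion_cartierImage (hCadd := hCadd) (hCsl := hCsl)]
  exact Set.subset_iUnion_of_subset m₀ (by rw [hceil])

end TestSet

theorem stmt9_general {R M : Type*} [CommRing R] [AddCommGroup M] [Module R M]
    [IsNoetherianRing R]
    (q : ℕ)
    (C : M → M) (hCadd : ∀ x y : M, C (x + y) = C x + C y)
    (hCsl : ∀ (a : R) (x : M), C (a ^ q • x) = a • C x)
    [Module.Finite R M] (hFpure : Function.Surjective C) (f : R) :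
    -- every right F-jumping exponent lies in `ℤ[1/p]`
    (∀ t ∈ FJNplus C q f, ∃ (m : ℕ) (k : ℤ), t * (q : ℝ) ^ m = (k : ℝ)) ∧
    -- equivalently: if `t q^m` is never an integer then `τ` is constant just right of `t`
    (∀ t : ℝ, 0 ≤ t → (∀ (m : ℕ) (k : ℤ), t * (q : ℝ) ^ m ≠ (k : ℝ)) →
      ∃ ε : ℝ, 0 < ε ∧ testSet C q f (t + ε) = testSet C q f t) := by
  have stable : ∀ t : ℝ, (∀ (m : ℕ) (k : ℤ), t * (q : ℝ) ^ m ≠ k) →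
      ∃ ε > 0, testSet C q f (t + ε) = testSet C q f t :=
    fun _ => exists_testSet_add_eq hCadd hCsl hFpure
  refine ⟨fun t ht => ?_, fun t _ => stable t⟩
  by_contra! hirr
  obtain ⟨ε, hε, heq⟩ := stable t hirr
  exact (ht.2 ε hε).ne heq

theorem stmt9 {R M : Type*} [CommRing R] [AddCommGroup M] [Module R M]
    (p : ℕ) [Fact p.Prime] [CharP R p] [IsNoetherianRing R]
    (hFF : (frobenius R p).Finite)
    (e q : ℕ) (he : 1 ≤ e) (hq : q = p ^ e)
    (C : M → M) (hCadd : ∀ x y : M, C (x + y) = C x + C y)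
    (hCsl : ∀ (a : R) (x : M), C (a ^ q • x) = a • C x)
    [Module.Finite R M] (hFpure : Function.Surjective C) (f : R) :
    -- every right F-jumping exponent lies in `ℤ[1/p]`
    (∀ t ∈ FJNplus C q f, ∃ (m : ℕ) (k : ℤ), t * (q : ℝ) ^ m = (k : ℝ)) ∧
    -- equivalently: if `t q^m` is never an integer then `τ` is constant just right of `t`
    (∀ t : ℝ, 0 ≤ t → (∀ (m : ℕ) (k : ℤ), t * (q : ℝ) ^ m ≠ (k : ℝ)) →
      ∃ ε : ℝ, 0 < ε ∧ testSet C q f (t + ε) = testSet C q f t) :=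
  stmt9_general q C hCadd hCsl hFpure f
end

section
/- Let R be a Noetherian F-finite commutative ring of characteristic p, let (M,C) be an F-pure q-Cartier module over R and let f ∈ R. Assume that the pair (M,f) satisfies the boundedness assumption. Then: (1) every F-jumping exponent t ∈ FJN(M,f) is a rational number; (2) for every real T ≥ 0 the set FJN(M,f) ∩ [0,T] is finite (so FJN(M,f) ∪ {0} is a discrete subset of ℝ). -/
open Pointwise Function

/-- The set `FJN⁻(M, f)` of left F-jumping exponents. -/
def FJNminus {R M : Type*} [CommRing R] [AddCommGroup M] [Module R M]
    (C : M → M) (q : ℕ) (f : R) : Set ℝ :=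
  {t | 0 < t ∧ ∀ ε : ℝ, 0 < ε → ε < t → testSet C q f t ⊂ testSet C q f (t - ε)}

/-!
Write `N(m, n) = C^m(f^n M)`. Surjectivity of `C` gives `N(m + 1, q n) = N(m, n)`, so
`m ↦ N(m, ⌈t q^m⌉)` is an increasing chain of submodules; by Noetherianity it stabilises at
`τ(M, f^t)`. Hence, if `τ(M, f^b) ≠ τ(M, f^a)` with `a < b`, then for every large `m` some
ν-invariant of level `m` lies in `[⌈a q^m⌉, ⌈b q^m⌉)`. The Skoda-type identity
`N(m, n + k q^m) = f^k N(m, n)` makes the ν-invariants periodic modulo `q^m`, so at most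
`⌈T⌉ L` of them lie below `⌈T⌉ q^m`. Counting ν-invariants below `⌈t q^m⌉` is then strictly
monotone on any set of exponents in `[0, T]` that `τ` separates, and the jumping numbers of each
kind form such a set.

For rationality, `C^k(τ(M, f^{q^k t})) = τ(M, f^t)` and `τ(M, f^{t + n}) = f^n τ(M, f^t)` show
that the fractional parts of the `q^k t` are again jumping numbers. They lie in the finite set
`FJN(M, f) ∩ [0, 1]`, so two of them coincide and `(q^k - q^j) t` is an integer.
-/

open Set Filter

lemma exists_rat_eq_of_finite_range_fract {q : ℕ} (hq : 2 ≤ q) {t : ℝ}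
    (h : (range fun k : ℕ => Int.fract ((q : ℝ) ^ k * t)).Finite) : ∃ r : ℚ, t = r := by
  obtain ⟨j, k, hjk, hfract⟩ := h.exists_lt_map_eq_of_forall_mem fun k => mem_range_self k
  obtain ⟨z, hz⟩ := Int.fract_eq_fract.1 hfract.symm
  have hpow : (q : ℝ) ^ j < (q : ℝ) ^ k := pow_lt_pow_right₀ (by exact_mod_cast hq) hjk
  refine ⟨z / ((q : ℚ) ^ k - (q : ℚ) ^ j), ?_⟩
  push_cast
  rw [eq_div_iff (sub_pos.2 hpow).ne']
  linear_combination hz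

lemma ncard_Iio_inter_lt_of_mem {s : Set ℕ} {x y n : ℕ} (hn : n ∈ s) (hxn : x ≤ n)
    (hny : n < y) :
    (Iio x ∩ s).ncard < (Iio y ∩ s).ncard := by
  refine ncard_lt_ncard ((ssubset_iff_of_subset ?_).2 ⟨n, ⟨hny, hn⟩, fun h => ?_⟩)
    ((finite_Iio y).inter_of_left s)
  · exact inter_subset_inter_left s (Iio_subset_Iio (by omega))
  · exact absurd h.1 (not_lt.2 hxn)

namespace CartierModule

variable {R M : Type*} [CommRing R] [AddCommGroup M] [Module R M] {C : M → M} {q : ℕ}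

variable (C) in
/-- `C^m(f^n M)`. -/
def cartierImage (f : R) (m n : ℕ) : Set M := C^[m] '' (f ^ n • (univ : Set M))

lemma mem_cartierImage {f : R} {m n : ℕ} {z : M} :
    z ∈ cartierImage C f m n ↔ ∃ y, C^[m] (f ^ n • y) = z := by
  simp [cartierImage, mem_smul_set]

lemma mem_nuLevel_univ {f : R} {m n : ℕ} :
    n ∈ nuLevel C f (univ : Set M) m ↔ cartierImage C f m n ≠ cartierImage C f m (n + 1) :=
  Iff.rfl

lemma testSet_eq_iUnion (f : R) (t : ℝ) :
    testSet C q f t = ⋃ m, cartierImage C f m ⌈t * (q : ℝ) ^ m⌉₊ := rfl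

lemma iterate_pow_smul (hCsl : ∀ (a : R) (x : M), C (a ^ q • x) = a • C x)
    (m : ℕ) (a : R) (x : M) : C^[m] (a ^ q ^ m • x) = a • C^[m] x := by
  induction m generalizing x with
  | zero => simp
  | succ m ih => rw [iterate_succ_apply, iterate_succ_apply, pow_succ, pow_mul, hCsl, ih]

lemma cartierImage_antitone (f : R) (m : ℕ) : Antitone (cartierImage C f m) := by
  intro n n' h z hz
  obtain ⟨y, rfl⟩ := mem_cartierImage.1 hz
  exact mem_cartierImage.2 ⟨f ^ (n' - n) • y, by rw [smul_smul, ← pow_add, Nat.add_sub_cancel' h]⟩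

lemma cartierImage_succ_mul (hCsl : ∀ (a : R) (x : M), C (a ^ q • x) = a • C x)
    (hsurj : Surjective C) (f : R) (m n : ℕ) :
    cartierImage C f (m + 1) (q * n) = cartierImage C f m n := by
  have hC : ∀ y, C (f ^ (q * n) • y) = f ^ n • C y := fun y => by rw [mul_comm, pow_mul, hCsl]
  ext z
  simp only [mem_cartierImage, iterate_succ_apply, hC]
  refine ⟨fun ⟨y, hy⟩ => ⟨C y, hy⟩, fun ⟨w, hw⟩ => ?_⟩
  obtain ⟨y, rfl⟩ := hsurj w
  exact ⟨y, hw⟩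

lemma cartierImage_add_mul_pow (hCsl : ∀ (a : R) (x : M), C (a ^ q • x) = a • C x)
    (f : R) (m n k : ℕ) :
    cartierImage C f m (n + k * q ^ m) = f ^ k • cartierImage C f m n := by
  have hC : ∀ y, C^[m] (f ^ (n + k * q ^ m) • y) = f ^ k • C^[m] (f ^ n • y) := fun y => by
    rw [pow_add, pow_mul, mul_comm, mul_smul, iterate_pow_smul hCsl]
  ext z
  simp only [mem_cartierImage, hC, mem_smul_set]
  exact ⟨fun ⟨y, hy⟩ => ⟨_, ⟨y, rfl⟩, hy⟩, fun ⟨_, ⟨y, hy⟩, hz⟩ => ⟨y, hy ▸ hz⟩⟩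

variable (C) in
def cartierSubmodule (hCadd : ∀ x y : M, C (x + y) = C x + C y)
    (hCsl : ∀ (a : R) (x : M), C (a ^ q • x) = a • C x) (f : R) (m n : ℕ) :
    Submodule R M where
  carrier := cartierImage C f m n
  add_mem' {_ _} ha hb := by
    obtain ⟨y, rfl⟩ := mem_cartierImage.1 ha
    obtain ⟨y', rfl⟩ := mem_cartierImage.1 hb
    exact mem_cartierImage.2 ⟨y + y', by
      rw [smul_add]; exact iterate_map_add (AddMonoidHom.mk' C hCadd) m _ _⟩
  zero_mem' := mem_cartierImage.2 ⟨0, by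
    rw [smul_zero]; exact iterate_map_zero (AddMonoidHom.mk' C hCadd) m⟩
  smul_mem' c {_} hz := by
    obtain ⟨y, rfl⟩ := mem_cartierImage.1 hz
    exact mem_cartierImage.2 ⟨c ^ q ^ m • y, by rw [smul_comm, iterate_pow_smul hCsl]⟩

lemma ceil_mul_pow_succ_le (t : ℝ) (m : ℕ) :
    ⌈t * (q : ℝ) ^ (m + 1)⌉₊ ≤ q * ⌈t * (q : ℝ) ^ m⌉₊ := by
  rw [Nat.ceil_le, pow_succ, ← mul_assoc, mul_comm _ (q : ℝ), Nat.cast_mul]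
  exact mul_le_mul_of_nonneg_left (Nat.le_ceil _) q.cast_nonneg

lemma monotone_cartierImage_ceil (hCsl : ∀ (a : R) (x : M), C (a ^ q • x) = a • C x)
    (hsurj : Surjective C) (f : R) (t : ℝ) :
    Monotone fun m => cartierImage C f m ⌈t * (q : ℝ) ^ m⌉₊ :=
  monotone_nat_of_le_succ fun m => by
    rw [← cartierImage_succ_mul hCsl hsurj]
    exact cartierImage_antitone f _ (ceil_mul_pow_succ_le t m)

lemma testSet_antitone (f : R) : Antitone (testSet C q f) := fun _ _ h =>
  iUnion_mono fun m => cartierImage_antitone f m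
    (Nat.ceil_mono (mul_le_mul_of_nonneg_right h (by positivity)))

lemma testSet_eventually_eq [IsNoetherian R M] (hCadd : ∀ x y : M, C (x + y) = C x + C y)
    (hCsl : ∀ (a : R) (x : M), C (a ^ q • x) = a • C x) (hsurj : Surjective C) (f : R) (t : ℝ) :
    ∀ᶠ m in atTop, testSet C q f t = cartierImage C f m ⌈t * (q : ℝ) ^ m⌉₊ := by
  have hmono := monotone_cartierImage_ceil hCsl hsurj f t
  obtain ⟨m₁, hm₁⟩ := monotone_stabilizes_iff_noetherian.2 ‹_›
    ⟨fun m => cartierSubmodule C hCadd hCsl f m ⌈t * (q : ℝ) ^ m⌉₊, fun _ _ h => hmono h⟩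
  have hstab : ∀ k, m₁ ≤ k → cartierImage C f k ⌈t * (q : ℝ) ^ k⌉₊ =
      cartierImage C f m₁ ⌈t * (q : ℝ) ^ m₁⌉₊ := fun k hk =>
    congrArg SetLike.coe (hm₁ k hk).symm
  filter_upwards [eventually_ge_atTop m₁] with m hm
  refine (iUnion_subset fun k => ?_).antisymm (subset_iUnion_of_subset m subset_rfl)
  calc cartierImage C f k ⌈t * (q : ℝ) ^ k⌉₊
      ⊆ cartierImage C f (max k m) ⌈t * (q : ℝ) ^ max k m⌉₊ := hmono (le_max_left k m)
    _ = cartierImage C f m ⌈t * (q : ℝ) ^ m⌉₊ := by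
      rw [hstab _ (hm.trans (le_max_right k m)), hstab m hm]

lemma cartierImage_eq_of_forall_not_mem_nuLevel {f : R} {m lo hi : ℕ} (h : lo ≤ hi)
    (hflat : ∀ n, lo ≤ n → n < hi → n ∉ nuLevel C f (univ : Set M) m) :
    cartierImage C f m lo = cartierImage C f m hi := by
  induction hi, h using Nat.le_induction with
  | base => rfl
  | succ hi hle ih =>
    rw [ih fun n h₁ h₂ => hflat n h₁ (by omega)]
    exact not_not.1 (hflat hi hle (by omega))

lemma eventually_exists_mem_nuLevel [IsNoetherian R M]
    (hCadd : ∀ x y : M, C (x + y) = C x + C y)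
    (hCsl : ∀ (a : R) (x : M), C (a ^ q • x) = a • C x) (hsurj : Surjective C) (f : R)
    {a b : ℝ} (hab : a ≤ b) (hne : testSet C q f b ≠ testSet C q f a) :
    ∀ᶠ m in atTop, ∃ n ∈ nuLevel C f (univ : Set M) m,
      ⌈a * (q : ℝ) ^ m⌉₊ ≤ n ∧ n < ⌈b * (q : ℝ) ^ m⌉₊ := by
  filter_upwards [testSet_eventually_eq hCadd hCsl hsurj f a,
    testSet_eventually_eq hCadd hCsl hsurj f b] with m ha hb
  by_contra! hflat
  refine hne ?_
  rw [ha, hb, cartierImage_eq_of_forall_not_mem_nuLevel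
    (Nat.ceil_mono (mul_le_mul_of_nonneg_right hab (by positivity)))]
  exact fun n h₁ h₂ hn => (hflat n hn h₁).not_gt h₂

lemma mod_pow_mem_nuLevel (hCsl : ∀ (a : R) (x : M), C (a ^ q • x) = a • C x) {f : R}
    {m n : ℕ} (hn : n ∈ nuLevel C f (univ : Set M) m) :
    n % q ^ m ∈ nuLevel C f (univ : Set M) m := by
  rw [mem_nuLevel_univ] at hn ⊢
  contrapose! hn
  rw [← Nat.mod_add_div' n (q ^ m), cartierImage_add_mul_pow hCsl, add_right_comm,
    cartierImage_add_mul_pow hCsl, hn]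

lemma ncard_Iio_mul_inter_nuLevel_le (hCsl : ∀ (a : R) (x : M), C (a ^ q • x) = a • C x)
    (f : R) (m K : ℕ) :
    (Iio (K * q ^ m) ∩ nuLevel C f (univ : Set M) m).ncard ≤
      K * (Iio (q ^ m) ∩ nuLevel C f (univ : Set M) m).ncard := by
  have hsub : Iio (K * q ^ m) ∩ nuLevel C f (univ : Set M) m ⊆
      (fun p : ℕ × ℕ => p.2 + p.1 * q ^ m) ''
        (Iio K ×ˢ (Iio (q ^ m) ∩ nuLevel C f (univ : Set M) m)) := by
    rintro n ⟨hlt, hn⟩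
    have hq : 0 < q ^ m := Nat.pos_of_ne_zero fun h => by simp [h] at hlt
    exact ⟨(n / q ^ m, n % q ^ m),
      ⟨(Nat.div_lt_iff_lt_mul hq).2 hlt, Nat.mod_lt n hq, mod_pow_mem_nuLevel hCsl hn⟩,
      Nat.mod_add_div' n (q ^ m)⟩
  have hfin := (finite_Iio K).prod ((finite_Iio (q ^ m)).inter_of_left
    (nuLevel C f (univ : Set M) m))
  calc _ ≤ _ := ncard_le_ncard hsub (hfin.image _)
    _ ≤ _ := ncard_image_le hfin
    _ = _ := by rw [ncard_prod, ncard_Iio_nat]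

lemma card_le_of_injOn_testSet [IsNoetherian R M] (hCadd : ∀ x y : M, C (x + y) = C x + C y)
    (hCsl : ∀ (a : R) (x : M), C (a ^ q • x) = a • C x) (hsurj : Surjective C) {f : R} {L : ℕ}
    (hbound : ∀ m : ℕ, 1 ≤ m →
      {n : ℕ | n < q ^ m ∧ n ∈ nuLevel C f (univ : Set M) m}.ncard ≤ L)
    {T : ℝ} {F : Finset ℝ} (hF : ∀ a ∈ F, a ≤ T) (hinj : InjOn (testSet C q f) F) :
    F.card ≤ ⌈T⌉₊ * L + 1 := by
  have hev : ∀ᶠ m in atTop, 1 ≤ m ∧ ∀ a ∈ F, ∀ b ∈ F, a < b →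
      ∃ n ∈ nuLevel C f (univ : Set M) m, ⌈a * (q : ℝ) ^ m⌉₊ ≤ n ∧ n < ⌈b * (q : ℝ) ^ m⌉₊ :=
    (eventually_ge_atTop 1).and <| (eventually_all_finset F).2 fun a ha =>
      (eventually_all_finset F).2 fun b hb => eventually_imp_distrib_left.2 fun hab =>
        eventually_exists_mem_nuLevel hCadd hCsl hsurj f hab.le fun h => hab.ne' (hinj hb ha h)
  obtain ⟨m, hm1, hm⟩ := hev.exists
  let count : ℝ → ℕ := fun a => (Iio ⌈a * (q : ℝ) ^ m⌉₊ ∩ nuLevel C f (univ : Set M) m).ncard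
  have hcount : StrictMonoOn count F := fun a ha b hb hab =>
    let ⟨_, hn, h₁, h₂⟩ := hm a ha b hb hab
    ncard_Iio_inter_lt_of_mem hn h₁ h₂
  have hmaps : MapsTo count F (Finset.range (⌈T⌉₊ * L + 1)) := fun a ha => by
    have hceil : ⌈a * (q : ℝ) ^ m⌉₊ ≤ ⌈T⌉₊ * q ^ m := by
      rw [Nat.ceil_le]
      push_cast
      gcongr
      exact (hF a ha).trans (Nat.le_ceil T)
    rw [Finset.coe_range, mem_Iio, Nat.lt_succ_iff]
    calc count a ≤ (Iio (⌈T⌉₊ * q ^ m) ∩ nuLevel C f (univ : Set M) m).ncard :=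
          ncard_le_ncard (inter_subset_inter_left _ (Iio_subset_Iio hceil))
            ((finite_Iio _).inter_of_left _)
      _ ≤ ⌈T⌉₊ * (Iio (q ^ m) ∩ nuLevel C f (univ : Set M) m).ncard :=
          ncard_Iio_mul_inter_nuLevel_le hCsl f m _
      _ ≤ ⌈T⌉₊ * L := Nat.mul_le_mul_left _ (hbound m hm1)
  simpa using Finset.card_le_card_of_injOn count hmaps hcount.injOn

lemma finite_of_injOn_testSet [IsNoetherian R M] (hCadd : ∀ x y : M, C (x + y) = C x + C y)
    (hCsl : ∀ (a : R) (x : M), C (a ^ q • x) = a • C x) (hsurj : Surjective C) {f : R} {L : ℕ}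
    (hbound : ∀ m : ℕ, 1 ≤ m →
      {n : ℕ | n < q ^ m ∧ n ∈ nuLevel C f (univ : Set M) m}.ncard ≤ L)
    {T : ℝ} {S : Set ℝ} (hS : S ⊆ Iic T) (hinj : InjOn (testSet C q f) S) : S.Finite := by
  by_contra hinf
  obtain ⟨F, hFS, hcard⟩ := Set.Infinite.exists_subset_card_eq hinf (⌈T⌉₊ * L + 2)
  have := card_le_of_injOn_testSet hCadd hCsl hsurj hbound (fun a ha => hS (hFS ha))
    (hinj.mono hFS)
  omega

lemma mem_FJNplus_iff {f : R} {t : ℝ} :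
    t ∈ FJNplus C q f ↔ 0 ≤ t ∧ ∀ s, t < s → testSet C q f s ≠ testSet C q f t := by
  refine and_congr_right fun _ => ⟨fun h s hts => ?_, fun h ε hε => ?_⟩
  · simpa using (h (s - t) (sub_pos.2 hts)).ne
  · exact (testSet_antitone f (by linarith)).ssubset_of_ne (h _ (by linarith))

lemma mem_FJNminus_iff {f : R} {t : ℝ} :
    t ∈ FJNminus C q f ↔ 0 < t ∧ ∀ s, 0 < s → s < t → testSet C q f t ≠ testSet C q f s := by
  refine and_congr_right fun _ => ⟨fun h s hs hst => ?_, fun h ε hε hεt => ?_⟩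
  · simpa using (h (t - s) (sub_pos.2 hst) (by linarith)).ne
  · exact (testSet_antitone f (by linarith)).ssubset_of_ne (h _ (by linarith) (by linarith))

lemma injOn_testSet_FJNplus (f : R) : InjOn (testSet C q f) (FJNplus C q f) := by
  intro a ha b hb hab
  by_contra hne
  rcases lt_or_gt_of_ne hne with h | h
  · exact (mem_FJNplus_iff.1 ha).2 b h hab.symm
  · exact (mem_FJNplus_iff.1 hb).2 a h hab

lemma injOn_testSet_FJNminus (f : R) : InjOn (testSet C q f) (FJNminus C q f) := by
  intro a ha b hb hab
  by_contra hne
  rcases lt_or_gt_of_ne hne with h | h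
  · exact (mem_FJNminus_iff.1 hb).2 a ha.1 h hab.symm
  · exact (mem_FJNminus_iff.1 ha).2 b hb.1 h hab

lemma testSet_add_natCast (hCsl : ∀ (a : R) (x : M), C (a ^ q • x) = a • C x) (f : R)
    {t : ℝ} (ht : 0 ≤ t) (n : ℕ) : testSet C q f (t + n) = f ^ n • testSet C q f t := by
  simp only [testSet_eq_iUnion, smul_set_iUnion]
  refine iUnion_congr fun m => ?_
  rw [add_mul, ← Nat.cast_pow, ← Nat.cast_mul, Nat.ceil_add_natCast (by positivity),
    cartierImage_add_mul_pow hCsl]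

lemma image_iterate_testSet_pow_mul (hCsl : ∀ (a : R) (x : M), C (a ^ q • x) = a • C x)
    (hsurj : Surjective C) (f : R) (k : ℕ) (t : ℝ) :
    C^[k] '' testSet C q f ((q : ℝ) ^ k * t) = testSet C q f t := by
  have hshift : ∀ m, C^[k] '' cartierImage C f m ⌈(q : ℝ) ^ k * t * (q : ℝ) ^ m⌉₊ =
      cartierImage C f (m + k) ⌈t * (q : ℝ) ^ (m + k)⌉₊ := fun m => by
    rw [cartierImage, cartierImage, ← image_comp, ← iterate_add, add_comm k, pow_add,
      mul_comm _ t, mul_assoc, mul_comm ((q : ℝ) ^ k)]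
  rw [testSet_eq_iUnion, image_iUnion, iUnion_congr hshift]
  exact (monotone_cartierImage_ceil hCsl hsurj f t).iUnion_nat_add k

lemma testSet_eq_of_testSet_pow_mul_eq (hCsl : ∀ (a : R) (x : M), C (a ^ q • x) = a • C x)
    (hsurj : Surjective C) {f : R} {k : ℕ} {s t : ℝ}
    (h : testSet C q f ((q : ℝ) ^ k * s) = testSet C q f ((q : ℝ) ^ k * t)) :
    testSet C q f s = testSet C q f t := by
  rw [← image_iterate_testSet_pow_mul hCsl hsurj f k s, h, image_iterate_testSet_pow_mul hCsl hsurj]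

lemma pow_mul_mem_FJNplus (hq : 0 < q) (hCsl : ∀ (a : R) (x : M), C (a ^ q • x) = a • C x)
    (hsurj : Surjective C) {f : R} {t : ℝ} (ht : t ∈ FJNplus C q f) (k : ℕ) :
    (q : ℝ) ^ k * t ∈ FJNplus C q f := by
  rw [mem_FJNplus_iff] at ht ⊢
  have hqk : (0 : ℝ) < (q : ℝ) ^ k := by positivity
  refine ⟨mul_nonneg hqk.le ht.1, fun s hs heq => ht.2 (s / (q : ℝ) ^ k)
    ((lt_div_iff₀' hqk).2 hs) (testSet_eq_of_testSet_pow_mul_eq (k := k) hCsl hsurj ?_)⟩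
  rwa [mul_div_cancel₀ _ hqk.ne']

lemma pow_mul_mem_FJNminus (hq : 0 < q) (hCsl : ∀ (a : R) (x : M), C (a ^ q • x) = a • C x)
    (hsurj : Surjective C) {f : R} {t : ℝ} (ht : t ∈ FJNminus C q f) (k : ℕ) :
    (q : ℝ) ^ k * t ∈ FJNminus C q f := by
  rw [mem_FJNminus_iff] at ht ⊢
  have hqk : (0 : ℝ) < (q : ℝ) ^ k := by positivity
  refine ⟨mul_pos hqk ht.1, fun s hs hst heq => ht.2 (s / (q : ℝ) ^ k) (by positivity)
    ((div_lt_iff₀' hqk).2 hst) (testSet_eq_of_testSet_pow_mul_eq (k := k) hCsl hsurj ?_)⟩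
  rwa [mul_div_cancel₀ _ hqk.ne']

lemma sub_natCast_mem_FJNplus (hCsl : ∀ (a : R) (x : M), C (a ^ q • x) = a • C x) {f : R}
    {t : ℝ} {n : ℕ} (ht : t ∈ FJNplus C q f) (hn : (n : ℝ) ≤ t) : t - n ∈ FJNplus C q f := by
  rw [mem_FJNplus_iff] at ht ⊢
  have h₀ : 0 ≤ t - n := sub_nonneg.2 hn
  refine ⟨h₀, fun s hs heq => ht.2 (s + n) (by linarith) ?_⟩
  rw [testSet_add_natCast hCsl f (h₀.trans hs.le), heq, ← testSet_add_natCast hCsl f h₀,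
    sub_add_cancel]

lemma sub_natCast_mem_FJNminus (hCsl : ∀ (a : R) (x : M), C (a ^ q • x) = a • C x) {f : R}
    {t : ℝ} {n : ℕ} (ht : t ∈ FJNminus C q f) (hn : (n : ℝ) < t) : t - n ∈ FJNminus C q f := by
  rw [mem_FJNminus_iff] at ht ⊢
  have h₀ : 0 < t - n := sub_pos.2 hn
  refine ⟨h₀, fun s hs hst heq => ht.2 (s + n) (by positivity) (by linarith) ?_⟩
  rw [testSet_add_natCast hCsl f hs.le, ← heq, ← testSet_add_natCast hCsl f h₀.le,
    sub_add_cancel]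

lemma exists_rat_eq_of_mem_FJN (hq : 2 ≤ q) (hCsl : ∀ (a : R) (x : M), C (a ^ q • x) = a • C x)
    (hsurj : Surjective C) {f : R}
    (hfin : ((FJNplus C q f ∪ FJNminus C q f) ∩ Icc 0 1).Finite) {t : ℝ}
    (ht : t ∈ FJNplus C q f ∪ FJNminus C q f) : ∃ r : ℚ, t = r := by
  by_contra! hirr
  suffices hsub : (range fun k : ℕ => Int.fract ((q : ℝ) ^ k * t)) ⊆
      (FJNplus C q f ∪ FJNminus C q f) ∩ Icc 0 1 by
    obtain ⟨r, hr⟩ := exists_rat_eq_of_finite_range_fract hq (hfin.subset hsub)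
    exact hirr r hr
  rintro _ ⟨k, rfl⟩
  dsimp only
  set x := (q : ℝ) ^ k * t
  have hx : 0 ≤ x := mul_nonneg (by positivity) (ht.elim (·.1) (·.1.le))
  have hfract : Int.fract x = x - ⌊x⌋₊ := by
    rw [Int.fract, ← Int.natCast_floor_eq_floor hx, Int.cast_natCast]
  refine ⟨?_, Int.fract_nonneg x, (Int.fract_lt_one x).le⟩
  rw [hfract]
  rcases ht with ht | ht
  · exact Or.inl (sub_natCast_mem_FJNplus hCsl (pow_mul_mem_FJNplus (by omega) hCsl hsurj ht k)
      (Nat.floor_le hx))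
  · refine Or.inr (sub_natCast_mem_FJNminus hCsl (pow_mul_mem_FJNminus (by omega) hCsl hsurj ht k)
      ((Nat.floor_le hx).lt_of_ne fun h => hirr (⌊x⌋₊ / (q : ℚ) ^ k) ?_))
    push_cast
    rw [h, mul_div_cancel_left₀ _ (by positivity)]

end CartierModule

open CartierModule in
theorem stmt10_general {R M : Type*} [CommRing R] [AddCommGroup M] [Module R M]
    (p : ℕ) [Fact p.Prime] [IsNoetherianRing R]
    (e q : ℕ) (he : 1 ≤ e) (hq : q = p ^ e)
    (C : M → M) (hCadd : ∀ x y : M, C (x + y) = C x + C y)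
    (hCsl : ∀ (a : R) (x : M), C (a ^ q • x) = a • C x)
    [Module.Finite R M] (hFpure : Function.Surjective C) (f : R)
    (hbound : ∃ L : ℕ, ∀ m : ℕ, 1 ≤ m →
      {n : ℕ | n < q ^ m ∧ n ∈ nuLevel C f (Set.univ : Set M) m}.ncard ≤ L) :
    -- (1) every F-jumping exponent is rational
    (∀ t ∈ FJNplus C q f ∪ FJNminus C q f, ∃ r : ℚ, t = (r : ℝ)) ∧
    -- (2) discreteness: only finitely many F-jumping exponents in any `[0, T]`
    (∀ T : ℝ, 0 ≤ T →
      ((FJNplus C q f ∪ FJNminus C q f) ∩ Set.Icc 0 T).Finite) := by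
  obtain ⟨L, hL⟩ := hbound
  have hq2 : 2 ≤ q := hq ▸ (Fact.out : p.Prime).two_le.trans (Nat.le_self_pow (by omega) p)
  have hfin : ∀ T : ℝ, 0 ≤ T → ((FJNplus C q f ∪ FJNminus C q f) ∩ Icc 0 T).Finite :=
    fun T _ => by
      rw [union_inter_distrib_right]
      exact (finite_of_injOn_testSet hCadd hCsl hFpure hL (fun _ h => h.2.2)
          ((injOn_testSet_FJNplus f).mono inter_subset_left)).union
        (finite_of_injOn_testSet hCadd hCsl hFpure hL (fun _ h => h.2.2)
          ((injOn_testSet_FJNminus f).mono inter_subset_left))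
  exact ⟨fun t ht => exists_rat_eq_of_mem_FJN hq2 hCsl hFpure (hfin 1 zero_le_one) ht, hfin⟩

theorem stmt10 {R M : Type*} [CommRing R] [AddCommGroup M] [Module R M]
    (p : ℕ) [Fact p.Prime] [CharP R p] [IsNoetherianRing R]
    (hFF : (frobenius R p).Finite)
    (e q : ℕ) (he : 1 ≤ e) (hq : q = p ^ e)
    (C : M → M) (hCadd : ∀ x y : M, C (x + y) = C x + C y)
    (hCsl : ∀ (a : R) (x : M), C (a ^ q • x) = a • C x)
    [Module.Finite R M] (hFpure : Function.Surjective C) (f : R)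
    (hbound : ∃ L : ℕ, ∀ m : ℕ, 1 ≤ m →
      {n : ℕ | n < q ^ m ∧ n ∈ nuLevel C f (Set.univ : Set M) m}.ncard ≤ L) :
    -- (1) every F-jumping exponent is rational
    (∀ t ∈ FJNplus C q f ∪ FJNminus C q f, ∃ r : ℚ, t = (r : ℝ)) ∧
    -- (2) discreteness: only finitely many F-jumping exponents in any `[0, T]`
    (∀ T : ℝ, 0 ≤ T →
      ((FJNplus C q f ∪ FJNminus C q f) ∩ Set.Icc 0 T).Finite) :=
  stmt10_general p e q he hq C hCadd hCsl hFpure f hbound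
end

section
/- Let R be a Noetherian F-finite commutative ring of characteristic p, let (M,C) be an F-pure q-Cartier module over R, let f ∈ R and fix an integer m ≥ 1. Then: (1) if t ∈ FJN⁻(M,f), then ⌈t q^m⌉ − 1 ∈ ν_f(q^m;M); (2) if t ∈ FJN⁺(M,f), then ⌊t q^m⌋ ∈ ν_f(q^m;M); (3) every n ∈ ν_f(q^m;M) arises in one of these two ways, i.e., there exists t ∈ FJN⁻(M,f) with n = ⌈t q^m⌉ − 1 or there exists t ∈ FJN⁺(M,f) with n = ⌊t q^m⌋. -/
open Pointwise Function

section Aux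
variable {R M : Type*} [CommRing R] [AddCommGroup M] [Module R M]
variable (C : M → M) (q : ℕ) (f : R)

/-- `T_k(n) = C^k(f^n M)`. -/
def TT (k n : ℕ) : Set M := C^[k] '' (f ^ n • (Set.univ : Set M))

lemma TT_antitone {k c d : ℕ} (h : c ≤ d) : TT C f k d ⊆ TT C f k c := by
  apply Set.image_mono
  rintro _ ⟨x, -, rfl⟩
  refine ⟨f ^ (d - c) • x, trivial, ?_⟩
  show f ^ c • f ^ (d - c) • x = f ^ d • x
  rw [smul_smul, ← pow_add]; congr 2; omega

lemma TT_shift (hCsl : ∀ (a : R) (x : M), C (a ^ q • x) = a • C x)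
    (hsurj : Surjective C) (k n : ℕ) :
    TT C f (k + 1) (q * n) = TT C f k n := by
  have him : C '' (f ^ (q * n) • (Set.univ : Set M)) = f ^ n • (Set.univ : Set M) := by
    apply subset_antisymm
    · rintro _ ⟨_, ⟨x, -, rfl⟩, rfl⟩
      refine ⟨C x, trivial, ?_⟩
      show f ^ n • C x = C (f ^ (q * n) • x)
      rw [← hCsl (f ^ n) x, ← pow_mul, mul_comm n q]
    · rintro _ ⟨y, -, rfl⟩
      obtain ⟨x, rfl⟩ := hsurj y
      refine ⟨f ^ (q * n) • x, ⟨x, trivial, rfl⟩, ?_⟩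
      show C (f ^ (q * n) • x) = f ^ n • C x
      rw [mul_comm q n, pow_mul, hCsl]
  show C^[k + 1] '' _ = _
  rw [Function.iterate_succ, Set.image_comp, him]
  rfl

lemma TT_shift_pow (hCsl : ∀ (a : R) (x : M), C (a ^ q • x) = a • C x)
    (hsurj : Surjective C) (k j n : ℕ) :
    TT C f (k + j) (q ^ j * n) = TT C f k n := by
  induction j with
  | zero => simp
  | succ j ih =>
      have : q ^ (j + 1) * n = q * (q ^ j * n) := by ring
      rw [this, show k + (j + 1) = (k + j) + 1 from rfl, TT_shift C q f hCsl hsurj, ih]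

lemma testSet_eq (t : ℝ) : testSet C q f t = ⋃ k : ℕ, TT C f k ⌈t * (q : ℝ) ^ k⌉₊ := rfl

lemma tau_antitone (hq : 0 < q) {s s' : ℝ} (h : s ≤ s') :
    testSet C q f s' ⊆ testSet C q f s := by
  rw [testSet_eq, testSet_eq]
  refine Set.iUnion_mono fun k => TT_antitone C f (Nat.ceil_le_ceil ?_)
  have : (0:ℝ) ≤ (q:ℝ) ^ k := by positivity
  exact mul_le_mul_of_nonneg_right h this

lemma tau_term (s : ℝ) (k : ℕ) : TT C f k ⌈s * (q : ℝ) ^ k⌉₊ ⊆ testSet C q f s :=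
  Set.subset_iUnion (fun k : ℕ => TT C f k ⌈s * (q : ℝ) ^ k⌉₊) k

lemma tau_upper (hCsl : ∀ (a : R) (x : M), C (a ^ q • x) = a • C x)
    (hsurj : Surjective C) (hq : 0 < q) {s : ℝ} {n m : ℕ}
    (h : (n : ℝ) ≤ s * (q : ℝ) ^ m) :
    testSet C q f s ⊆ TT C f m n := by
  rw [testSet_eq]
  refine Set.iUnion_subset fun k => ?_
  rcases le_or_gt m k with hmk | hkm
  · have hsh : TT C f k (q ^ (k - m) * n) = TT C f m n := by
      have := TT_shift_pow C q f hCsl hsurj m (k - m) n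
      rwa [show m + (k - m) = k by omega] at this
    rw [← hsh]
    apply TT_antitone
    have h1 : ((q ^ (k - m) * n : ℕ) : ℝ) ≤ s * (q : ℝ) ^ k := by
      push_cast
      calc ((q:ℝ) ^ (k - m) * n) ≤ (q:ℝ) ^ (k - m) * (s * (q:ℝ) ^ m) := by
            apply mul_le_mul_of_nonneg_left h (by positivity)
        _ = s * (q:ℝ) ^ k := by
            rw [show (q:ℝ) ^ k = (q:ℝ) ^ (k - m) * (q:ℝ) ^ m by
              rw [← pow_add]; congr 1; omega]
            ring
    exact_mod_cast h1.trans (Nat.le_ceil _)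
  · have hsh : TT C f m (q ^ (m - k) * ⌈s * (q : ℝ) ^ k⌉₊) = TT C f k ⌈s * (q : ℝ) ^ k⌉₊ := by
      have := TT_shift_pow C q f hCsl hsurj k (m - k) ⌈s * (q : ℝ) ^ k⌉₊
      rwa [show k + (m - k) = m by omega] at this
    rw [← hsh]
    apply TT_antitone
    have h1 : (n : ℝ) ≤ ((q ^ (m - k) * ⌈s * (q : ℝ) ^ k⌉₊ : ℕ) : ℝ) := by
      push_cast
      calc (n : ℝ) ≤ s * (q:ℝ) ^ m := h
        _ = (q:ℝ) ^ (m - k) * (s * (q:ℝ) ^ k) := by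
            rw [← mul_assoc, mul_comm ((q:ℝ) ^ (m-k)) s, mul_assoc, ← pow_add,
              show m - k + k = m by omega]
        _ ≤ (q:ℝ) ^ (m - k) * ⌈s * (q : ℝ) ^ k⌉₊ := by
            apply mul_le_mul_of_nonneg_left (Nat.le_ceil _) (by positivity)
    exact_mod_cast h1

lemma tau_lower {s : ℝ} {n m : ℕ} (h : s * (q : ℝ) ^ m ≤ (n : ℝ) + 1) :
    TT C f m (n + 1) ⊆ testSet C q f s := by
  refine subset_trans ?_ (tau_term C q f s m)
  apply TT_antitone
  apply Nat.ceil_le.mpr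
  push_cast
  exact h

lemma tau_const (hCsl : ∀ (a : R) (x : M), C (a ^ q • x) = a • C x)
    (hsurj : Surjective C) (hq : 0 < q) {s : ℝ} {n m : ℕ}
    (heq : TT C f m n = TT C f m (n + 1))
    (h1 : (n : ℝ) ≤ s * (q : ℝ) ^ m) (h2 : s * (q : ℝ) ^ m ≤ (n : ℝ) + 1) :
    testSet C q f s = TT C f m n := by
  apply subset_antisymm (tau_upper C q f hCsl hsurj hq h1)
  rw [heq]
  exact tau_lower C q f h2

lemma tau_endpoint (hCsl : ∀ (a : R) (x : M), C (a ^ q • x) = a • C x)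
    (hsurj : Surjective C) (hq : 0 < q) (n m : ℕ) :
    testSet C q f ((n : ℝ) / (q : ℝ) ^ m) = TT C f m n := by
  have hQ : ((q : ℝ) ^ m) ≠ 0 := by positivity
  have hcanc : (n : ℝ) / (q : ℝ) ^ m * (q : ℝ) ^ m = (n : ℝ) := div_mul_cancel₀ _ hQ
  apply subset_antisymm
  · exact tau_upper C q f hCsl hsurj hq (le_of_eq hcanc.symm)
  · have := tau_term C q f ((n : ℝ) / (q : ℝ) ^ m) m
    rwa [hcanc, Nat.ceil_natCast] at this

end Aux

theorem stmt11 {R M : Type*} [CommRing R] [AddCommGroup M] [Module R M]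
    (p : ℕ) [Fact p.Prime] [CharP R p] [IsNoetherianRing R]
    (hFF : (frobenius R p).Finite)
    (e q : ℕ) (he : 1 ≤ e) (hq : q = p ^ e)
    (C : M → M) (hCadd : ∀ x y : M, C (x + y) = C x + C y)
    (hCsl : ∀ (a : R) (x : M), C (a ^ q • x) = a • C x)
    [Module.Finite R M] (hFpure : Function.Surjective C) (f : R)
    (m : ℕ) (hm : 1 ≤ m) :
    -- (1) `t ∈ FJN⁻` gives `⌈t q^m⌉ - 1 ∈ ν_f(q^m; M)`
    (∀ t ∈ FJNminus C q f,
      ⌈t * (q : ℝ) ^ m⌉₊ - 1 ∈ nuLevel C f (Set.univ : Set M) m) ∧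
    -- (2) `t ∈ FJN⁺` gives `⌊t q^m⌋ ∈ ν_f(q^m; M)`
    (∀ t ∈ FJNplus C q f,
      ⌊t * (q : ℝ) ^ m⌋₊ ∈ nuLevel C f (Set.univ : Set M) m) ∧
    -- (3) every `n ∈ ν_f(q^m; M)` arises in one of these two ways
    (∀ n ∈ nuLevel C f (Set.univ : Set M) m,
      (∃ t ∈ FJNminus C q f, n = ⌈t * (q : ℝ) ^ m⌉₊ - 1) ∨
      (∃ t ∈ FJNplus C q f, n = ⌊t * (q : ℝ) ^ m⌋₊)) := by
  have hq0 : 0 < q := hq ▸ pow_pos (Fact.out : p.Prime).pos e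
  have hqR : (0:ℝ) < (q:ℝ) := by exact_mod_cast hq0
  have hQ : (0:ℝ) < (q:ℝ) ^ m := pow_pos hqR m
  have hnu : ∀ n : ℕ, n ∈ nuLevel C f (Set.univ : Set M) m ↔
      TT C f m n ≠ TT C f m (n + 1) := fun n => Iff.rfl
  refine ⟨?_, ?_, ?_⟩
  · -- Part (1)
    rintro t ⟨ht0, hjump⟩
    set c := ⌈t * (q:ℝ)^m⌉₊ with hc
    have htQ : 0 < t * (q:ℝ)^m := mul_pos ht0 hQ
    have hc1 : 1 ≤ c := Nat.ceil_pos.mpr htQ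
    have hcastn : ((c - 1 : ℕ) : ℝ) = (c : ℝ) - 1 := by
      rw [Nat.cast_sub hc1]; norm_num
    rw [hnu]
    intro heq
    have hn1 : c - 1 + 1 = c := by omega
    have hub : t * (q:ℝ)^m ≤ ((c - 1 : ℕ) : ℝ) + 1 := by
      rw [hcastn]
      have := Nat.le_ceil (t * (q:ℝ)^m)
      linarith
    have hlb' : (c:ℝ) - 1 < t * (q:ℝ)^m := by
      have := Nat.ceil_lt_add_one htQ.le
      linarith
    have hlb : ((c - 1 : ℕ) : ℝ) ≤ t * (q:ℝ)^m := by rw [hcastn]; linarith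
    have hτt : testSet C q f t = TT C f m (c - 1) :=
      tau_const C q f hCsl hFpure hq0 heq hlb hub
    set t' := max (t/2) (((c - 1 : ℕ) : ℝ) / (q:ℝ)^m) with ht'
    have ht'pos : 0 < t' := lt_max_of_lt_left (by linarith)
    have ht'lt : t' < t := by
      apply max_lt (by linarith)
      rw [div_lt_iff₀ hQ, hcastn]
      linarith
    have hlb2 : ((c - 1 : ℕ) : ℝ) ≤ t' * (q:ℝ)^m := by
      have h1 : ((c - 1 : ℕ) : ℝ) / (q:ℝ)^m ≤ t' := le_max_right _ _
      calc ((c - 1 : ℕ) : ℝ) = ((c - 1 : ℕ) : ℝ) / (q:ℝ)^m * (q:ℝ)^m :=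
            (div_mul_cancel₀ _ hQ.ne').symm
        _ ≤ t' * (q:ℝ)^m := mul_le_mul_of_nonneg_right h1 hQ.le
    have hub2 : t' * (q:ℝ)^m ≤ ((c - 1 : ℕ) : ℝ) + 1 := by
      rw [ht', max_mul_of_nonneg _ _ hQ.le, hcastn]
      apply max_le
      · have h1 : t/2 * (q:ℝ)^m ≤ t * (q:ℝ)^m :=
          mul_le_mul_of_nonneg_right (by linarith) hQ.le
        have h2 := Nat.le_ceil (t * (q:ℝ)^m)
        calc t/2 * (q:ℝ)^m ≤ t * (q:ℝ)^m := h1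
          _ ≤ (c:ℝ) := h2
          _ = (c:ℝ) - 1 + 1 := by ring
      · rw [div_mul_cancel₀ _ hQ.ne']
        linarith
    have hτt' : testSet C q f t' = TT C f m (c - 1) :=
      tau_const C q f hCsl hFpure hq0 heq hlb2 hub2
    have hss := (hjump (t - t') (by linarith) (by linarith)).ne
    rw [show t - (t - t') = t' by ring] at hss
    exact hss (hτt.trans hτt'.symm)
  · -- Part (2)
    rintro t ⟨ht0, hjump⟩
    set n := ⌊t * (q:ℝ)^m⌋₊ with hn
    have htQ0 : 0 ≤ t * (q:ℝ)^m := mul_nonneg ht0 hQ.le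
    rw [hnu]
    intro heq
    have hlb : (n:ℝ) ≤ t * (q:ℝ)^m := Nat.floor_le htQ0
    have hub : t * (q:ℝ)^m < (n:ℝ) + 1 := Nat.lt_floor_add_one _
    have hτt : testSet C q f t = TT C f m n :=
      tau_const C q f hCsl hFpure hq0 heq hlb hub.le
    set s := ((n:ℝ) + 1) / (q:ℝ)^m with hs
    have hsQ : s * (q:ℝ)^m = (n:ℝ) + 1 := div_mul_cancel₀ _ hQ.ne'
    have hτs : testSet C q f s = TT C f m n :=
      tau_const C q f hCsl hFpure hq0 heq (by rw [hsQ]; linarith) (by rw [hsQ])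
    have hst : t < s := by
      rw [hs, lt_div_iff₀ hQ]
      exact hub
    have hss := (hjump (s - t) (by linarith)).ne
    rw [show t + (s - t) = s by ring] at hss
    exact hss (hτs.trans hτt.symm)
  · -- Part (3)
    intro n hn
    rw [hnu] at hn
    set a := (n:ℝ) / (q:ℝ)^m with ha
    set b := ((n:ℝ) + 1) / (q:ℝ)^m with hb
    have haQ : a * (q:ℝ)^m = (n:ℝ) := div_mul_cancel₀ _ hQ.ne'
    have hbQ : b * (q:ℝ)^m = (n:ℝ) + 1 := div_mul_cancel₀ _ hQ.ne'
    have ha0 : 0 ≤ a := by positivity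
    have hab : a < b := by
      rw [ha, hb, div_lt_div_iff₀ hQ hQ]
      nlinarith
    have hτa : testSet C q f a = TT C f m n := tau_endpoint C q f hCsl hFpure hq0 n m
    have hτb : testSet C q f b = TT C f m (n + 1) := by
      have h := tau_endpoint C q f hCsl hFpure hq0 (n + 1) m
      rw [Nat.cast_add_one] at h
      exact h
    set S : Set ℝ := {s | a ≤ s ∧ s ≤ b ∧ testSet C q f s = testSet C q f b} with hS
    have hbS : b ∈ S := ⟨hab.le, le_refl _, rfl⟩
    have hbdd : BddBelow S := ⟨a, fun s hs => hs.1⟩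
    set t₀ := sInf S with ht₀
    have hat₀ : a ≤ t₀ := le_csInf ⟨b, hbS⟩ fun s hs => hs.1
    have ht₀b : t₀ ≤ b := csInf_le hbdd hbS
    have htail : ∀ s, t₀ < s → s ≤ b → s ∈ S := by
      intro s hlt hsb
      obtain ⟨s', hs'S, hs's⟩ := exists_lt_of_csInf_lt ⟨b, hbS⟩ hlt
      refine ⟨hs'S.1.trans hs's.le, hsb, ?_⟩
      apply subset_antisymm
      · have := tau_antitone C q f hq0 hs's.le
        rw [hs'S.2.2] at this
        exact this
      · exact tau_antitone C q f hq0 hsb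
    have hane : testSet C q f a ≠ testSet C q f b := by
      rw [hτa, hτb]; exact hn
    by_cases hmem : t₀ ∈ S
    · left
      have hat₀' : a < t₀ := lt_of_le_of_ne hat₀ (by intro h; rw [← h] at hmem; exact hane hmem.2.2)
      have ht₀0 : 0 < t₀ := lt_of_le_of_lt ha0 hat₀'
      have hceil : ⌈t₀ * (q:ℝ)^m⌉₊ = n + 1 := by
        apply le_antisymm
        · apply Nat.ceil_le.mpr
          push_cast
          calc t₀ * (q:ℝ)^m ≤ b * (q:ℝ)^m := mul_le_mul_of_nonneg_right ht₀b hQ.le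
            _ = (n:ℝ) + 1 := hbQ
        · apply Nat.succ_le.mpr
          apply Nat.lt_ceil.mpr
          calc (n:ℝ) = a * (q:ℝ)^m := haQ.symm
            _ < t₀ * (q:ℝ)^m := mul_lt_mul_of_pos_right hat₀' hQ
      refine ⟨t₀, ⟨ht₀0, ?_⟩, by omega⟩
      intro ε hε hεt
      have hsub : testSet C q f t₀ ⊆ testSet C q f (t₀ - ε) :=
        tau_antitone C q f hq0 (by linarith)
      refine hsub.ssubset_of_ne ?_
      intro hE
      have ht₀τ : testSet C q f t₀ = testSet C q f b := hmem.2.2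
      rcases le_or_gt a (t₀ - ε) with h' | h'
      · have hmem' : t₀ - ε ∈ S := ⟨h', by linarith, hE.symm.trans ht₀τ⟩
        have := csInf_le hbdd hmem'
        rw [← ht₀] at this
        linarith
      · have h1 : testSet C q f a ⊆ testSet C q f (t₀ - ε) :=
          tau_antitone C q f hq0 h'.le
        rw [← hE, ht₀τ] at h1
        rw [hτa, hτb] at h1
        exact hn (subset_antisymm h1 (TT_antitone C f (by omega)))
    · right
      have ht₀τ : testSet C q f t₀ ≠ testSet C q f b := fun h => hmem ⟨hat₀, ht₀b, h⟩
      have ht₀b' : t₀ < b := lt_of_le_of_ne ht₀b (by intro h; apply hmem; rw [h]; exact hbS)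
      have hfl : ⌊t₀ * (q:ℝ)^m⌋₊ = n := by
        rw [Nat.floor_eq_iff (by nlinarith)]
        constructor
        · calc (n:ℝ) = a * (q:ℝ)^m := haQ.symm
            _ ≤ t₀ * (q:ℝ)^m := mul_le_mul_of_nonneg_right hat₀ hQ.le
        · push_cast
          calc t₀ * (q:ℝ)^m < b * (q:ℝ)^m := mul_lt_mul_of_pos_right ht₀b' hQ
            _ = (n:ℝ) + 1 := hbQ
      refine ⟨t₀, ⟨ha0.trans hat₀, ?_⟩, hfl.symm⟩
      intro ε hε
      have hsub : testSet C q f (t₀ + ε) ⊆ testSet C q f t₀ :=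
        tau_antitone C q f hq0 (by linarith)
      refine hsub.ssubset_of_ne ?_
      intro hE
      rcases le_or_gt (t₀ + ε) b with h' | h'
      · have hmem' : t₀ + ε ∈ S := htail _ (by linarith) h'
        have h2 := hmem'.2.2
        rw [hE] at h2
        exact ht₀τ h2
      · have h1 : testSet C q f (t₀ + ε) ⊆ testSet C q f b :=
          tau_antitone C q f hq0 h'.le
        have h2 : testSet C q f b ⊆ testSet C q f t₀ :=
          tau_antitone C q f hq0 ht₀b
        rw [hE] at h1
        exact ht₀τ (subset_antisymm h1 h2)
end

section
/- Let R be a Noetherian F-finite commutative ring of characteristic p, let (M,C) be an F-pure q-Cartier module over R and let f ∈ R. Set N = Σ_{m≥0} C^m(fM). Then: (1) fM ⊆ N, so in particular f^k M ⊆ N for some k ≥ 1; (2) for every integer n ≥ 1, N = Σ_{m≥0} C^m(f^n M) = Σ_{m≥1} C^m(f^n M); (3) if N' ⊆ M is a finitely generated R-submodule with C(N') ⊆ N' and f^k M ⊆ N' for some integer k ≥ 1, then N ⊆ N'. In particular, N is the smallest finitely generated C-stable submodule of M that agrees with M after inverting f. -/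
/-!
Write `S(s) = Σ_{m ≥ 0} span (C^m s)` (`iterateSpan`), so that `M_{f!} = S(f M)`. Surjectivity
of `C` gives `x = C^n z`, and `q`-semilinearity gives `f x = C^n (f^{q^n} z)`; since `q ≥ 2` we
have `n ≤ q^n`, hence `f M ⊆ C^n (f^n M)` and `S(f M) ≤ S(C (f^n M)) ≤ S(f^n M) ≤ S(f M)`,
which is (2). A `C`-stable submodule containing `f^k M` contains `S(f^k M) = M_{f!}`, which
is (3).
-/

open Pointwise Function

/-- The submodule `M_{f!} = Σ_{m ≥ 0} C^m (f M)` of an F-pure `q`-Cartier module `(M, C)`. -/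
def Mfbang {R M : Type*} [CommRing R] [AddCommGroup M] [Module R M]
    (C : M → M) (f : R) : Submodule R M :=
  ⨆ m : ℕ, Submodule.span R (C^[m] '' (f • (Set.univ : Set M)))

section IterateSpan

variable (R : Type*) {M : Type*} [CommRing R] [AddCommGroup M] [Module R M]

def iterateSpan (C : M → M) (s : Set M) : Submodule R M :=
  ⨆ m : ℕ, Submodule.span R (C^[m] '' s)

variable {R} {C : M → M} {s t : Set M}

theorem subset_iterateSpan : s ⊆ iterateSpan R C s := fun x hx =>
  Submodule.mem_iSup_of_mem 0 (Submodule.subset_span ⟨x, hx, rfl⟩)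

theorem iterateSpan_mono (h : s ⊆ t) : iterateSpan R C s ≤ iterateSpan R C t :=
  iSup_mono fun _ => Submodule.span_mono (Set.image_mono h)

theorem iterateSpan_le_of_subset_image_iterate {k : ℕ} (h : s ⊆ C^[k] '' t) :
    iterateSpan R C s ≤ iterateSpan R C t := by
  refine iSup_le fun m => Submodule.span_le.2 ?_
  rintro _ ⟨x, hx, rfl⟩
  obtain ⟨y, hy, rfl⟩ := h hx
  refine Submodule.mem_iSup_of_mem (m + k) (Submodule.subset_span ⟨y, hy, ?_⟩)
  rw [iterate_add_apply]

theorem iterateSpan_image_le : iterateSpan R C (C '' s) ≤ iterateSpan R C s :=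
  iterateSpan_le_of_subset_image_iterate (k := 1) subset_rfl

theorem iterateSpan_le {N : Submodule R M} (hN : ∀ x ∈ N, C x ∈ N) (hs : s ⊆ N) :
    iterateSpan R C s ≤ N := by
  refine iSup_le fun m => Submodule.span_le.2 ?_
  rintro _ ⟨x, hx, rfl⟩
  exact Set.MapsTo.iterate (fun x hx => hN x hx) m (hs hx)

theorem iSup_span_image_iterate_succ (s : Set M) :
    ⨆ m : ℕ, Submodule.span R (C^[m + 1] '' s) = iterateSpan R C (C '' s) := by
  simp only [iterateSpan, iterate_succ, Set.image_comp]

end IterateSpan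

section Cartier

variable {R M : Type*} [CommRing R] [AddCommGroup M] [Module R M]

theorem smul_univ_subset_of_dvd {a b : R} (h : a ∣ b) :
    b • (Set.univ : Set M) ⊆ a • Set.univ := by
  obtain ⟨c, rfl⟩ := h
  rintro _ ⟨x, -, rfl⟩
  exact ⟨c • x, trivial, (mul_smul a c x).symm⟩

variable {q : ℕ} {C : M → M} (hC : ∀ (a : R) (x : M), C (a ^ q • x) = a • C x)
include hC

theorem iterate_pow_smul (m : ℕ) (a : R) (x : M) :
    C^[m] (a ^ q ^ m • x) = a • C^[m] x := by
  induction m generalizing a x with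
  | zero => simp
  | succ m ih => rw [iterate_succ_apply, iterate_succ_apply, pow_succ, pow_mul, hC, ih]

theorem smul_univ_subset_image_iterate (hsurj : Surjective C) (a : R) (m : ℕ) :
    a • (Set.univ : Set M) ⊆ C^[m] '' (a ^ q ^ m • Set.univ) := by
  rintro _ ⟨x, -, rfl⟩
  obtain ⟨z, rfl⟩ := hsurj.iterate m x
  exact ⟨a ^ q ^ m • z, Set.smul_mem_smul_set trivial, iterate_pow_smul hC m a z⟩

theorem Mfbang_le_iterateSpan_image (hq : 2 ≤ q) (hsurj : Surjective C) (f : R) (n : ℕ) :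
    Mfbang C f ≤ iterateSpan R C (C '' (f ^ (n + 1) • Set.univ)) := by
  have hdvd : f ^ (n + 1) ∣ f ^ q ^ (n + 1) :=
    pow_dvd_pow f (Nat.lt_pow_self hq).le
  refine iterateSpan_le_of_subset_image_iterate (k := n) ?_
  calc f • Set.univ
      ⊆ C^[n + 1] '' (f ^ q ^ (n + 1) • Set.univ) := smul_univ_subset_image_iterate hC hsurj f _
    _ ⊆ C^[n + 1] '' (f ^ (n + 1) • Set.univ) := Set.image_mono (smul_univ_subset_of_dvd hdvd)
    _ = C^[n] '' (C '' (f ^ (n + 1) • Set.univ)) := by rw [iterate_succ, Set.image_comp]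

end Cartier

theorem stmt13_general {R M : Type*} [CommRing R] [AddCommGroup M] [Module R M]
    (p : ℕ) [Fact p.Prime]
    (e q : ℕ) (he : 1 ≤ e) (hq : q = p ^ e)
    (C : M → M)
    (hCsl : ∀ (a : R) (x : M), C (a ^ q • x) = a • C x)
    (hFpure : Function.Surjective C) (f : R) :
    -- (1) `f M ⊆ M_{f!}`, and in particular `f^k M ⊆ M_{f!}` for some `k ≥ 1`
    ((∀ x : M, f • x ∈ Mfbang C f) ∧
      ∃ k : ℕ, 1 ≤ k ∧ ∀ x : M, f ^ k • x ∈ Mfbang C f) ∧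
    -- (2) for every `n ≥ 1`, `M_{f!} = Σ_{m ≥ 0} C^m(f^n M) = Σ_{m ≥ 1} C^m(f^n M)`
    (∀ n : ℕ, 1 ≤ n →
      Mfbang C f =
        (⨆ m : ℕ, Submodule.span R (C^[m] '' ((f ^ n) • (Set.univ : Set M)))) ∧
      Mfbang C f =
        (⨆ m : ℕ, Submodule.span R (C^[m + 1] '' ((f ^ n) • (Set.univ : Set M))))) ∧
    -- (3) minimality: any finitely generated `C`-stable submodule `N'` containing
    -- `f^k M` for some `k ≥ 1` contains `M_{f!}`
    (∀ N' : Submodule R M, N'.FG → (∀ x ∈ N', C x ∈ N') →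
      ∀ k : ℕ, 1 ≤ k → (∀ x : M, f ^ k • x ∈ N') → Mfbang C f ≤ N') := by
  have hq2 : 2 ≤ q := hq ▸ Nat.one_lt_pow (by omega) (Fact.out : p.Prime).one_lt
  have hfM : ∀ x : M, f • x ∈ Mfbang C f := fun x =>
    subset_iterateSpan (Set.smul_mem_smul_set trivial)
  have hcycle : ∀ n, 1 ≤ n →
      Mfbang C f ≤ iterateSpan R C (C '' (f ^ n • Set.univ)) ∧
      iterateSpan R C (C '' (f ^ n • Set.univ)) ≤ iterateSpan R C (f ^ n • Set.univ) ∧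
      iterateSpan R C (f ^ n • Set.univ) ≤ Mfbang C f := by
    intro n hn
    obtain ⟨n, rfl⟩ := Nat.exists_eq_add_of_le' hn
    exact ⟨Mfbang_le_iterateSpan_image hCsl hq2 hFpure f n, iterateSpan_image_le,
      iterateSpan_mono (smul_univ_subset_of_dvd (dvd_pow_self f n.succ_ne_zero))⟩
  refine ⟨⟨hfM, 1, le_rfl, by simpa using hfM⟩, fun n hn => ?_, ?_⟩
  · obtain ⟨h₁, h₂, h₃⟩ := hcycle n hn
    rw [iSup_span_image_iterate_succ]
    exact ⟨le_antisymm (h₁.trans h₂) h₃, le_antisymm h₁ (h₂.trans h₃)⟩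
  · intro N' _ hN' k hk hfk
    exact (hcycle k hk).1.trans (iterateSpan_image_le.trans
      (iterateSpan_le hN' (by rintro _ ⟨x, -, rfl⟩; exact hfk x)))

theorem stmt13 {R M : Type*} [CommRing R] [AddCommGroup M] [Module R M]
    (p : ℕ) [Fact p.Prime] [CharP R p] [IsNoetherianRing R]
    (hFF : (frobenius R p).Finite)
    (e q : ℕ) (he : 1 ≤ e) (hq : q = p ^ e)
    (C : M → M) (hCadd : ∀ x y : M, C (x + y) = C x + C y)
    (hCsl : ∀ (a : R) (x : M), C (a ^ q • x) = a • C x)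
    [Module.Finite R M] (hFpure : Function.Surjective C) (f : R) :
    -- (1) `f M ⊆ M_{f!}`, and in particular `f^k M ⊆ M_{f!}` for some `k ≥ 1`
    ((∀ x : M, f • x ∈ Mfbang C f) ∧
      ∃ k : ℕ, 1 ≤ k ∧ ∀ x : M, f ^ k • x ∈ Mfbang C f) ∧
    -- (2) for every `n ≥ 1`, `M_{f!} = Σ_{m ≥ 0} C^m(f^n M) = Σ_{m ≥ 1} C^m(f^n M)`
    (∀ n : ℕ, 1 ≤ n →
      Mfbang C f =
        (⨆ m : ℕ, Submodule.span R (C^[m] '' ((f ^ n) • (Set.univ : Set M)))) ∧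
      Mfbang C f =
        (⨆ m : ℕ, Submodule.span R (C^[m + 1] '' ((f ^ n) • (Set.univ : Set M))))) ∧
    -- (3) minimality: any finitely generated `C`-stable submodule `N'` containing
    -- `f^k M` for some `k ≥ 1` contains `M_{f!}`
    (∀ N' : Submodule R M, N'.FG → (∀ x ∈ N', C x ∈ N') →
      ∀ k : ℕ, 1 ≤ k → (∀ x : M, f ^ k • x ∈ N') → Mfbang C f ≤ N') :=
  stmt13_general p e q he hq C hCsl hFpure f
end

section
/- Let R be a Noetherian F-finite commutative ring of characteristic p, let (M,C) be an F-pure q-Cartier module over R and let f ∈ R. Then: (1) there exists m₀ such that for all m ≥ m₀, M_{f!} = C^m(fM); (2) C(M_{f!}) = M_{f!}, so M_{f!} is itself an F-pure q-Cartier module. -/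
open Pointwise Function

theorem stmt14 {R M : Type*} [CommRing R] [AddCommGroup M] [Module R M]
    (p : ℕ) [Fact p.Prime] [CharP R p] [IsNoetherianRing R]
    (hFF : (frobenius R p).Finite)
    (e q : ℕ) (he : 1 ≤ e) (hq : q = p ^ e)
    (C : M → M) (hCadd : ∀ x y : M, C (x + y) = C x + C y)
    (hCsl : ∀ (a : R) (x : M), C (a ^ q • x) = a • C x)
    [Module.Finite R M] (hFpure : Function.Surjective C) (f : R) :
    -- (1) `M_{f!} = C^m(f M)` for all sufficiently large `m`
    (∃ m₀ : ℕ, ∀ m : ℕ, m₀ ≤ m →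
      (Mfbang C f : Set M) = C^[m] '' (f • (Set.univ : Set M))) ∧
    -- (2) `C(M_{f!}) = M_{f!}`, and `M_{f!}` is a finitely generated (hence F-pure)
    -- `q`-Cartier module
    (C '' (Mfbang C f : Set M) = (Mfbang C f : Set M) ∧ (Mfbang C f).FG) := by
  have hq1 : 1 ≤ q := by
    subst hq; exact Nat.one_le_pow _ _ (Fact.out (p := p.Prime)).pos
  -- basic facts about `C` and its iterates
  have hC0 : C 0 = 0 := by
    have h := hCadd 0 0
    rw [add_zero] at h
    exact left_eq_add.mp h
  have hIadd : ∀ (m : ℕ) (x y : M), C^[m] (x + y) = C^[m] x + C^[m] y := by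
    intro m
    induction m with
    | zero => intro x y; simp
    | succ n ih =>
        intro x y
        rw [Function.iterate_succ_apply, hCadd, ih, ← Function.iterate_succ_apply,
          ← Function.iterate_succ_apply]
  have hI0 : ∀ m : ℕ, C^[m] (0 : M) = 0 := by
    intro m
    have h := hIadd m 0 0
    rw [add_zero] at h
    exact left_eq_add.mp h
  have hIsl : ∀ (m : ℕ) (a : R) (x : M), C^[m] (a ^ (q ^ m) • x) = a • C^[m] x := by
    intro m
    induction m with
    | zero => intro a x; simp
    | succ n ih =>
        intro a x
        rw [Function.iterate_succ_apply, pow_succ, pow_mul, hCsl, ih,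
          ← Function.iterate_succ_apply]
  -- the sets `C^[m] '' (f • M)`
  set S : ℕ → Set M := fun m => C^[m] '' (f • (Set.univ : Set M)) with hS
  have hSmem : ∀ (m : ℕ) (x : M), C^[m] (f • x) ∈ S m := by
    intro m x
    exact ⟨f • x, Set.smul_mem_smul_set (Set.mem_univ x), rfl⟩
  have hSform : ∀ (m : ℕ) (y : M), y ∈ S m → ∃ x : M, C^[m] (f • x) = y := by
    intro m y hy
    rcases hy with ⟨z, hz, rfl⟩
    rcases hz with ⟨x, -, rfl⟩
    exact ⟨x, rfl⟩
  -- each `S m` is a submodule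
  have hUdef : ∀ m : ℕ, ∃ U : Submodule R M, (U : Set M) = S m := by
    intro m
    refine ⟨{ carrier := S m
              add_mem' := ?_
              zero_mem' := ?_
              smul_mem' := ?_ }, rfl⟩
    · rintro a b ha hb
      obtain ⟨x, rfl⟩ := hSform m a ha
      obtain ⟨y, rfl⟩ := hSform m b hb
      have : C^[m] (f • x) + C^[m] (f • y) = C^[m] (f • (x + y)) := by
        rw [smul_add, hIadd]
      rw [this]
      exact hSmem m _
    · have : (0 : M) = C^[m] (f • (0 : M)) := by rw [smul_zero, hI0]
      rw [this]
      exact hSmem m _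
    · rintro a y hy
      obtain ⟨x, rfl⟩ := hSform m y hy
      have : a • C^[m] (f • x) = C^[m] (f • (a ^ (q ^ m) • x)) := by
        rw [← hIsl m a (f • x), smul_comm]
      rw [this]
      exact hSmem m _
  choose U hU using hUdef
  have hspan : ∀ m : ℕ, Submodule.span R (S m) = U m := by
    intro m
    rw [← hU m]
    exact Submodule.span_eq (U m)
  -- the chain is increasing
  have hstep : ∀ m : ℕ, U m ≤ U (m + 1) := by
    intro m y hy
    rw [← SetLike.mem_coe, hU m] at hy
    obtain ⟨x, rfl⟩ := hSform m y hy
    obtain ⟨z, hz⟩ := hFpure x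
    have hfx : f • x = C (f • (f ^ (q - 1) • z)) := by
      have : f • (f ^ (q - 1) • z) = f ^ q • z := by
        rw [← mul_smul, ← pow_succ', Nat.sub_add_cancel hq1]
      rw [this, hCsl, hz]
    rw [← SetLike.mem_coe, hU (m + 1)]
    rw [hfx, ← Function.iterate_succ_apply]
    exact hSmem (m + 1) _
  have hmono : Monotone U := monotone_nat_of_le_succ hstep
  -- Noetherian stabilization
  have hnoeth : IsNoetherian R M := inferInstance
  obtain ⟨m₀, hm₀⟩ := monotone_stabilizes_iff_noetherian.mpr hnoeth ⟨U, hmono⟩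
  have hm₀' : ∀ m : ℕ, m₀ ≤ m → U m₀ = U m := hm₀
  -- `Mfbang C f = U m₀`
  have hMf : Mfbang C f = U m₀ := by
    apply le_antisymm
    · apply iSup_le
      intro m
      rw [show Submodule.span R (C^[m] '' (f • (Set.univ : Set M))) = Submodule.span R (S m)
          from rfl, hspan m]
      rcases le_total m m₀ with h | h
      · exact hmono h
      · exact le_of_eq (hm₀' m h).symm
    · refine le_trans ?_ (le_iSup _ m₀)
      rw [show Submodule.span R (C^[m₀] '' (f • (Set.univ : Set M))) = Submodule.span R (S m₀)
          from rfl, hspan m₀]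
  have hMfset : ∀ m : ℕ, m₀ ≤ m → (Mfbang C f : Set M) = S m := by
    intro m hm
    rw [hMf, hm₀' m hm, hU m]
  refine ⟨⟨m₀, fun m hm => hMfset m hm⟩, ?_, ?_⟩
  · rw [hMfset m₀ le_rfl]
    have hSS : S m₀ = S (m₀ + 1) := by
      rw [← hU m₀, ← hU (m₀ + 1), hm₀' (m₀ + 1) (Nat.le_succ m₀)]
    nth_rewrite 2 [hSS]
    show C '' (C^[m₀] '' (f • (Set.univ : Set M))) = C^[m₀ + 1] '' (f • (Set.univ : Set M))
    rw [Function.iterate_succ', Set.image_comp]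
  · exact IsNoetherian.noetherian (Mfbang C f)
end

section
/- Let R be a Noetherian F-finite commutative ring of characteristic p, let (M,C) be an F-pure q-Cartier module over R, let f ∈ R and let t ≥ 0 be a real number. Assume that either M = M_{f!} or t·q^m ∉ ℤ for all m ≥ 0. Then: (1) for every integer n ≥ t, τ(M,f^t) = Σ_{m≥0} C^m(f^{⌈t(q^m−1)⌉ + n} M); (2) if N ⊆ M is a finitely generated R-submodule such that f^k M ⊆ N for some k ≥ 1 and C^m(f^{⌈t(q^m−1)⌉} N) ⊆ N for all m ≥ 0, then τ(M,f^t) ⊆ N. Consequently τ(M,f^t) is the smallest such submodule N. -/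
open Pointwise Function

section Aux
variable {R M : Type*} [CommRing R] [AddCommGroup M] [Module R M]
variable {C : M → M} {q : ℕ} {f : R}

lemma aux_mem_iff {c : R} {m : ℕ} {z : M} :
    z ∈ C^[m] '' (c • (Set.univ : Set M)) ↔ ∃ x, C^[m] (c • x) = z := by
  constructor
  · rintro ⟨w, hw, rfl⟩
    obtain ⟨x, -, rfl⟩ := hw
    exact ⟨x, rfl⟩
  · rintro ⟨x, rfl⟩
    exact ⟨c • x, ⟨x, trivial, rfl⟩, rfl⟩

lemma aux_iter_smul (hCsl : ∀ (a : R) (x : M), C (a ^ q • x) = a • C x) :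
    ∀ (m : ℕ) (r : R) (x : M), C^[m] (r ^ q ^ m • x) = r • C^[m] x := by
  intro m
  induction m with
  | zero => intro r x; simp
  | succ m ih =>
    intro r x
    have h1 : r ^ q ^ (m + 1) = (r ^ q) ^ q ^ m := by
      rw [← pow_mul, pow_succ, mul_comm]
    rw [Function.iterate_succ_apply', Function.iterate_succ_apply', h1, ih (r ^ q) x,
      hCsl r]

lemma aux_T_mono {a b m : ℕ} (hab : a ≤ b) :
    C^[m] '' ((f ^ b) • (Set.univ : Set M)) ⊆ C^[m] '' ((f ^ a) • (Set.univ : Set M)) := by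
  intro z hz
  rw [aux_mem_iff] at hz ⊢
  obtain ⟨x, rfl⟩ := hz
  refine ⟨f ^ (b - a) • x, ?_⟩
  rw [smul_smul, ← pow_add, Nat.add_sub_cancel' hab]

lemma aux_T_step (hCsl : ∀ (a : R) (x : M), C (a ^ q • x) = a • C x)
    (hs : Function.Surjective C) (a m : ℕ) :
    C^[m + 1] '' ((f ^ (q * a)) • (Set.univ : Set M))
      = C^[m] '' ((f ^ a) • (Set.univ : Set M)) := by
  have hpow : f ^ (q * a) = (f ^ a) ^ q := by rw [← pow_mul, mul_comm]
  ext z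
  rw [aux_mem_iff, aux_mem_iff]
  constructor
  · rintro ⟨x, rfl⟩
    exact ⟨C x, by rw [Function.iterate_succ_apply, hpow, hCsl (f ^ a) x]⟩
  · rintro ⟨x, rfl⟩
    obtain ⟨y, rfl⟩ := hs x
    exact ⟨y, by rw [Function.iterate_succ_apply, hpow, hCsl (f ^ a) y]⟩

lemma aux_T_shift (hCsl : ∀ (a : R) (x : M), C (a ^ q • x) = a • C x)
    (hs : Function.Surjective C) (j a m : ℕ) :
    C^[m + j] '' ((f ^ (q ^ j * a)) • (Set.univ : Set M))
      = C^[m] '' ((f ^ a) • (Set.univ : Set M)) := by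
  induction j with
  | zero => simp
  | succ j ih =>
    have h1 : m + (j + 1) = (m + j) + 1 := by ring
    have h2 : q ^ (j + 1) * a = q * (q ^ j * a) := by ring
    rw [h1, h2, aux_T_step hCsl hs, ih]

lemma aux_case1 (hCadd : ∀ x y : M, C (x + y) = C x + C y)
    (hCsl : ∀ (a : R) (x : M), C (a ^ q • x) = a • C x)
    (hs : Function.Surjective C) (hq1 : 1 ≤ q)
    (h : Mfbang C f = ⊤) (x : M) : ∃ (m : ℕ) (y : M), C^[m] (f • y) = x := by
  have hC0 : C 0 = 0 := by
    have h0 := hCadd 0 0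
    rw [add_zero] at h0
    exact (add_eq_left.mp h0.symm)
  have hiter0 : ∀ m : ℕ, C^[m] (0 : M) = 0 := by
    intro m
    induction m with
    | zero => rfl
    | succ m ih => rw [Function.iterate_succ_apply', ih, hC0]
  have hiteradd : ∀ (m : ℕ) (u v : M), C^[m] (u + v) = C^[m] u + C^[m] v := by
    intro m
    induction m with
    | zero => intro u v; rfl
    | succ m ih =>
      intro u v
      rw [Function.iterate_succ_apply', ih, hCadd,
        Function.iterate_succ_apply', Function.iterate_succ_apply']
  let S : ℕ → Submodule R M := fun m =>
    { carrier := C^[m] '' (f • (Set.univ : Set M))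
      zero_mem' := by
        rw [aux_mem_iff]
        exact ⟨0, by rw [smul_zero, hiter0]⟩
      add_mem' := by
        intro u v hu hv
        rw [aux_mem_iff] at hu hv ⊢
        obtain ⟨xu, rfl⟩ := hu
        obtain ⟨xv, rfl⟩ := hv
        exact ⟨xu + xv, by rw [smul_add, hiteradd]⟩
      smul_mem' := by
        intro r u hu
        rw [aux_mem_iff] at hu ⊢
        obtain ⟨xu, rfl⟩ := hu
        refine ⟨r ^ q ^ m • xu, ?_⟩
        rw [smul_comm, aux_iter_smul hCsl] }
  have hspan : ∀ m : ℕ, Submodule.span R (C^[m] '' (f • (Set.univ : Set M))) = S m := by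
    intro m
    exact Submodule.span_eq (S m)
  have hmono : Monotone S := by
    apply monotone_nat_of_le_succ
    intro m z hz
    change z ∈ C^[m] '' (f • (Set.univ : Set M)) at hz
    change z ∈ C^[m + 1] '' (f • (Set.univ : Set M))
    rw [aux_mem_iff] at hz ⊢
    obtain ⟨x0, rfl⟩ := hz
    obtain ⟨y, rfl⟩ := hs x0
    refine ⟨f ^ (q - 1) • y, ?_⟩
    rw [Function.iterate_succ_apply]
    congr 1
    rw [smul_smul, ← pow_succ']
    have : q - 1 + 1 = q := Nat.succ_pred_eq_of_pos hq1
    rw [this]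
    exact hCsl f y
  have hx : x ∈ ⨆ m, S m := by
    have h2 : Mfbang C f = ⨆ m, S m := by
      rw [Mfbang]
      exact iSup_congr hspan
    rw [← h2, h]
    trivial
  obtain ⟨m, hm⟩ := (Submodule.mem_iSup_of_directed S hmono.directed_le).1 hx
  change x ∈ C^[m] '' (f • (Set.univ : Set M)) at hm
  rw [aux_mem_iff] at hm
  obtain ⟨y, rfl⟩ := hm
  exact ⟨m, y, rfl⟩

end Aux

theorem stmt15 {R M : Type*} [CommRing R] [AddCommGroup M] [Module R M]
    (p : ℕ) [Fact p.Prime] [CharP R p] [IsNoetherianRing R]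
    (hFF : (frobenius R p).Finite)
    (e q : ℕ) (he : 1 ≤ e) (hq : q = p ^ e)
    (C : M → M) (hCadd : ∀ x y : M, C (x + y) = C x + C y)
    (hCsl : ∀ (a : R) (x : M), C (a ^ q • x) = a • C x)
    [Module.Finite R M] (hFpure : Function.Surjective C)
    (f : R) (t : ℝ) (ht : 0 ≤ t)
    (hyp : Mfbang C f = ⊤ ∨ ∀ (m : ℕ) (k : ℤ), t * (q : ℝ) ^ m ≠ (k : ℝ)) :
    -- (1) `τ(M, f^t) = Σ_{m ≥ 0} C^m(f^{⌈t(q^m - 1)⌉ + n} M)` for any integer `n ≥ t`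
    (∀ n : ℕ, t ≤ (n : ℝ) →
      testSet C q f t =
        ⋃ m : ℕ, C^[m] ''
          ((f ^ (⌈t * ((q : ℝ) ^ m - 1)⌉₊ + n)) • (Set.univ : Set M))) ∧
    -- (2) `τ(M, f^t)` is contained in every finitely generated submodule `N` with
    -- `f^k M ⊆ N` for some `k ≥ 1` and `C^m(f^{⌈t(q^m-1)⌉} N) ⊆ N` for all `m ≥ 0`
    (∀ N : Submodule R M, N.FG →
      (∃ k : ℕ, 1 ≤ k ∧ ∀ x : M, f ^ k • x ∈ N) →
      (∀ m : ℕ,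
        C^[m] '' ((f ^ ⌈t * ((q : ℝ) ^ m - 1)⌉₊) • (N : Set M)) ⊆ (N : Set M)) →
      testSet C q f t ⊆ (N : Set M)) := by
  have hq2 : 2 ≤ q := by
    rw [hq]
    calc 2 ≤ p := (Fact.out : p.Prime).two_le
    _ ≤ p ^ e := Nat.le_self_pow (by omega) p
  have hq1 : 1 ≤ q := by omega
  have hqR : (1 : ℝ) < (q : ℝ) := by exact_mod_cast hq2.trans_lt' one_lt_two
  have hqR1 : (1 : ℝ) ≤ (q : ℝ) := hqR.le
  have hpow1 : ∀ m : ℕ, (1 : ℝ) ≤ (q : ℝ) ^ m := fun m => one_le_pow₀ hqR1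
  -- Part (1)
  have part1 : ∀ n : ℕ, t ≤ (n : ℝ) →
      testSet C q f t =
        ⋃ m : ℕ, C^[m] ''
          ((f ^ (⌈t * ((q : ℝ) ^ m - 1)⌉₊ + n)) • (Set.univ : Set M)) := by
    intro n hn
    apply Set.Subset.antisymm
    · -- forward inclusion
      intro z hz
      rw [testSet, Set.mem_iUnion] at hz
      obtain ⟨m, hz⟩ := hz
      rw [aux_mem_iff] at hz
      obtain ⟨x, rfl⟩ := hz
      rcases hyp with hyp1 | hyp2
      · -- case M = M_{f!}
        have key : ∀ c : ℕ, ∀ (m' a' : ℕ) (x' : M),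
            t * (q : ℝ) ^ m' ≤ (a' : ℝ) →
            t * (q : ℝ) ^ m' + (n : ℝ) + 1 ≤ (a' : ℝ) + (c : ℝ) →
            C^[m'] ((f ^ a') • x') ∈
              ⋃ m : ℕ, C^[m] ''
                ((f ^ (⌈t * ((q : ℝ) ^ m - 1)⌉₊ + n)) • (Set.univ : Set M)) := by
          intro c
          induction c with
          | zero =>
            intro m' a' x' h1 h2
            rw [Set.mem_iUnion]
            refine ⟨m', aux_T_mono ?_ (aux_mem_iff.2 ⟨x', rfl⟩)⟩
            -- ⌈t(q^m'-1)⌉ + n ≤ a'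
            have hc : (⌈t * ((q : ℝ) ^ m' - 1)⌉₊ : ℝ) < t * ((q : ℝ) ^ m' - 1) + 1 :=
              Nat.ceil_lt_add_one (mul_nonneg ht (by linarith [hpow1 m']))
            have : (⌈t * ((q : ℝ) ^ m' - 1)⌉₊ + n : ℝ) < (a' : ℝ) := by
              push_cast at h2 ⊢
              nlinarith [hpow1 m']
            exact_mod_cast this.le
          | succ c ih =>
            intro m' a' x' h1 h2
            obtain ⟨m2, y, rfl⟩ := aux_case1 hCadd hCsl hFpure hq1 hyp1 x'
            have heq : C^[m'] ((f ^ a') • C^[m2] (f • y))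
                = C^[m' + m2] ((f ^ (a' * q ^ m2 + 1)) • y) := by
              rw [← aux_iter_smul hCsl m2 (f ^ a') (f • y), ← Function.iterate_add_apply]
              congr 1
              rw [smul_smul, ← pow_mul, ← pow_succ]
            rw [heq]
            have hQ : (1 : ℝ) ≤ (q : ℝ) ^ m2 := hpow1 m2
            apply ih (m' + m2) (a' * q ^ m2 + 1) y
            · push_cast
              rw [pow_add]
              nlinarith
            · push_cast at h2 ⊢
              rw [pow_add]
              nlinarith [mul_le_mul_of_nonneg_right h1 (by linarith : (0:ℝ) ≤ (q:ℝ) ^ m2 - 1)]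
        apply key (n + 1) m ⌈t * (q : ℝ) ^ m⌉₊ x (Nat.le_ceil _)
        push_cast
        linarith [Nat.le_ceil (t * (q : ℝ) ^ m)]
      · -- case t q^m never an integer
        set a := ⌈t * (q : ℝ) ^ m⌉₊ with ha
        have hlt : t * (q : ℝ) ^ m < (a : ℝ) := by
          refine lt_of_le_of_ne (Nat.le_ceil _) ?_
          intro hcon
          exact hyp2 m (a : ℤ) (by push_cast; exact hcon)
        have hε0 : 0 < (a : ℝ) - t * (q : ℝ) ^ m := by linarith
        obtain ⟨j, hj⟩ := pow_unbounded_of_one_lt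
          (((n : ℝ) + 1) / ((a : ℝ) - t * (q : ℝ) ^ m)) hqR
        have hj' : (n : ℝ) + 1 < ((a : ℝ) - t * (q : ℝ) ^ m) * (q : ℝ) ^ j := by
          rw [div_lt_iff₀ hε0] at hj
          linarith [hj]
        rw [Set.mem_iUnion]
        refine ⟨m + j, ?_⟩
        have hmem : C^[m] ((f ^ a) • x) ∈
            C^[m + j] '' ((f ^ (q ^ j * a)) • (Set.univ : Set M)) := by
          rw [aux_T_shift hCsl hFpure]
          exact aux_mem_iff.2 ⟨x, rfl⟩
        refine aux_T_mono ?_ hmem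
        -- ⌈t(q^{m+j}-1)⌉ + n ≤ q^j * a
        have hc : (⌈t * ((q : ℝ) ^ (m + j) - 1)⌉₊ : ℝ) < t * ((q : ℝ) ^ (m + j) - 1) + 1 :=
          Nat.ceil_lt_add_one (mul_nonneg ht (by linarith [hpow1 (m + j)]))
        have hgoal : (⌈t * ((q : ℝ) ^ (m + j) - 1)⌉₊ + n : ℝ) < ((q ^ j * a : ℕ) : ℝ) := by
          rw [pow_add] at hc
          push_cast
          rw [pow_add]
          linarith [hc, hj', ht]
        exact_mod_cast hgoal.le
    · -- reverse inclusion
      intro z hz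
      rw [Set.mem_iUnion] at hz
      obtain ⟨m, hz⟩ := hz
      rw [testSet, Set.mem_iUnion]
      refine ⟨m, aux_T_mono ?_ hz⟩
      rw [Nat.ceil_le]
      push_cast
      have := Nat.le_ceil (t * ((q : ℝ) ^ m - 1))
      nlinarith [hpow1 m]
  refine ⟨part1, ?_⟩
  -- Part (2)
  intro N _ ⟨k, hk1, hkM⟩ hN
  set n := max k ⌈t⌉₊ with hn
  have htn : t ≤ (n : ℝ) := by
    calc t ≤ (⌈t⌉₊ : ℝ) := Nat.le_ceil t
    _ ≤ (n : ℝ) := by exact_mod_cast le_max_right k ⌈t⌉₊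
  intro z hz
  rw [part1 n htn, Set.mem_iUnion] at hz
  obtain ⟨m, hz⟩ := hz
  rw [aux_mem_iff] at hz
  obtain ⟨x, rfl⟩ := hz
  have hsplit : f ^ (⌈t * ((q : ℝ) ^ m - 1)⌉₊ + n) • x
      = f ^ ⌈t * ((q : ℝ) ^ m - 1)⌉₊ • (f ^ (n - k) • (f ^ k • x)) := by
    rw [smul_smul, smul_smul, ← pow_add, ← pow_add]
    congr 2
    have : k ≤ n := le_max_left k ⌈t⌉₊
    omega
  rw [hsplit]
  apply hN m
  refine ⟨f ^ ⌈t * ((q : ℝ) ^ m - 1)⌉₊ • (f ^ (n - k) • (f ^ k • x)), ?_, rfl⟩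
  exact Set.smul_mem_smul_set (N.smul_mem _ (hkM x))
end

section
/- Let R be a Noetherian F-finite commutative ring of characteristic p, let (M,C) be an F-pure q-Cartier module over R and let f ∈ R. Assume M = M_{f!}. Then for every real t ≥ 0 there exists ε > 0 such that τ(M,f^s) = τ(M,f^t) for all real s with t ≤ s < t + ε. Consequently FJN⁺(M,f) = ∅ and FJN(M,f) = FJN⁻(M,f). -/
open Pointwise Function

/-!
Since `M` is Noetherian, `M = Σ_{k ∈ S} C^k(f M)` for a finite set `S`, and the increasing chain
`C^m(f^{⌈t q^m⌉} M)` stabilises, so `τ(M, f^t) = C^m(f^n M)` with `n = ⌈t q^m⌉`. Multiplying the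
finite decomposition by `f^n` and using `a • C^k(N) = C^k(a^{q^k} N)` gives
`C^m(f^n M) ⊆ Σ_{k ∈ S} C^{m+k}(f^{n q^k + 1} M)`. The extra factor `f` absorbs any increase of `t`
by less than `1 / q^{m + max S}`, so all these terms lie in `τ(M, f^s)` for such `s`.
-/

theorem Submodule.pow_smul_top_antitone {R M : Type*} [CommRing R] [AddCommGroup M] [Module R M]
    (r : R) : Antitone fun n : ℕ => r ^ n • (⊤ : Submodule R M) :=
  antitone_nat_of_succ_le fun n => by
    rw [pow_succ, mul_smul]
    exact smul_mono_right _ le_top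

theorem ceil_mul_pow_le_of_lt {q : ℕ} (hq : 0 < q) {t s : ℝ} {m k K : ℕ} (hk : k ≤ K)
    (hs : s < t + 1 / (q : ℝ) ^ (m + K)) :
    ⌈s * (q : ℝ) ^ (m + k)⌉₊ ≤ ⌈t * (q : ℝ) ^ m⌉₊ * q ^ k + 1 := by
  have hq' : (1 : ℝ) ≤ q := Nat.one_le_cast.2 hq
  refine Nat.ceil_le.2 ?_
  push_cast
  calc s * (q : ℝ) ^ (m + k) ≤ (t + 1 / (q : ℝ) ^ (m + K)) * (q : ℝ) ^ (m + k) := by gcongr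
    _ = t * (q : ℝ) ^ m * (q : ℝ) ^ k + (q : ℝ) ^ (m + k) / (q : ℝ) ^ (m + K) := by
      rw [pow_add (q : ℝ) m k]
      ring
    _ ≤ ⌈t * (q : ℝ) ^ m⌉₊ * (q : ℝ) ^ k + 1 := by
      gcongr
      · exact Nat.le_ceil _
      · exact div_le_one_of_le₀ (pow_le_pow_right₀ hq' (by omega)) (by positivity)

structure CartierMap (R M : Type*) [CommRing R] [AddCommGroup M] [Module R M] (q : ℕ)
    extends M →+ M where
  map_pow_smul' : ∀ (a : R) (x : M), toFun (a ^ q • x) = a • toFun x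

namespace CartierMap

variable {R M : Type*} [CommRing R] [AddCommGroup M] [Module R M] {q : ℕ}

instance : FunLike (CartierMap R M q) M M where
  coe C := C.toFun
  coe_injective C D h := by
    obtain ⟨C, _⟩ := C
    obtain ⟨D, _⟩ := D
    congr
    exact DFunLike.coe_injective h

instance : AddMonoidHomClass (CartierMap R M q) M M where
  map_add C := C.map_add'
  map_zero C := C.map_zero'

variable (C : CartierMap R M q)

theorem map_pow_smul (a : R) (x : M) : C (a ^ q • x) = a • C x :=
  C.map_pow_smul' a x

def iter (m : ℕ) : CartierMap R M (q ^ m) where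
  toFun := C^[m]
  map_zero' := iterate_fixed (map_zero C) m
  map_add' := iterate_map_add C m
  map_pow_smul' a x := by
    induction m generalizing x with
    | zero => simp
    | succ m ih =>
      rw [iterate_succ_apply, iterate_succ_apply, pow_succ, pow_mul, C.map_pow_smul, ih]

@[simp]
theorem coe_iter (m : ℕ) : ⇑(C.iter m) = (⇑C)^[m] := rfl

def mapSubmodule (N : Submodule R M) : Submodule R M where
  carrier := C '' N
  add_mem' := by
    rintro _ _ ⟨x, hx, rfl⟩ ⟨y, hy, rfl⟩
    exact ⟨x + y, N.add_mem hx hy, map_add C x y⟩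
  zero_mem' := ⟨0, N.zero_mem, map_zero C⟩
  smul_mem' := by
    rintro a _ ⟨x, hx, rfl⟩
    exact ⟨a ^ q • x, N.smul_mem _ hx, C.map_pow_smul a x⟩

@[simp]
theorem coe_mapSubmodule (N : Submodule R M) : (C.mapSubmodule N : Set M) = C '' N := rfl

theorem mapSubmodule_mono : Monotone C.mapSubmodule :=
  fun _ _ h => Set.image_mono h

theorem mapSubmodule_top (hC : Surjective C) : C.mapSubmodule ⊤ = ⊤ :=
  SetLike.coe_injective (by simpa using hC.range_eq)

theorem mapSubmodule_pow_smul (a : R) (N : Submodule R M) :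
    C.mapSubmodule (a ^ q • N) = a • C.mapSubmodule N := by
  ext z
  simp only [← SetLike.mem_coe, coe_mapSubmodule, Submodule.coe_pointwise_smul,
    Set.mem_smul_set, Set.mem_image]
  constructor
  · rintro ⟨_, ⟨x, hx, rfl⟩, rfl⟩
    exact ⟨C x, ⟨x, hx, rfl⟩, (C.map_pow_smul a x).symm⟩
  · rintro ⟨_, ⟨x, hx, rfl⟩, rfl⟩
    exact ⟨a ^ q • x, ⟨x, hx, rfl⟩, C.map_pow_smul a x⟩

theorem mapSubmodule_iSup {ι : Sort*} (N : ι → Submodule R M) :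
    C.mapSubmodule (⨆ i, N i) = ⨆ i, C.mapSubmodule (N i) := by
  refine le_antisymm ?_ (iSup_le fun i => C.mapSubmodule_mono (le_iSup N i))
  rintro _ ⟨x, hx, rfl⟩
  refine Submodule.iSup_induction N (motive := fun x => C x ∈ ⨆ i, C.mapSubmodule (N i)) hx
    (fun i x hx => Submodule.mem_iSup_of_mem i ⟨x, hx, rfl⟩) ?_ fun x y hx hy => ?_
  · rw [map_zero]
    exact zero_mem _
  · rw [map_add]
    exact add_mem hx hy

theorem iter_mapSubmodule_iter (m k : ℕ) (N : Submodule R M) :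
    (C.iter m).mapSubmodule ((C.iter k).mapSubmodule N) = (C.iter (m + k)).mapSubmodule N :=
  SetLike.coe_injective (by simp [Set.image_image, iterate_add_apply])

variable (f : R)

noncomputable def testApprox (t : ℝ) (m : ℕ) : Submodule R M :=
  (C.iter m).mapSubmodule (f ^ ⌈t * (q : ℝ) ^ m⌉₊ • ⊤)

noncomputable def testSubmodule (t : ℝ) : Submodule R M :=
  ⨆ m, C.testApprox f t m

theorem antitone_testApprox (m : ℕ) : Antitone (C.testApprox f · m) := fun _ _ h =>
  (C.iter m).mapSubmodule_mono (Submodule.pow_smul_top_antitone f (Nat.ceil_mono (by gcongr)))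

theorem antitone_testSubmodule : Antitone (C.testSubmodule f) := fun _ _ h =>
  iSup_mono fun m => C.antitone_testApprox f m h

theorem monotone_testApprox (hC : Surjective C) (t : ℝ) : Monotone (C.testApprox f t) := by
  refine monotone_nat_of_le_succ fun m => ?_
  set c := ⌈t * (q : ℝ) ^ m⌉₊
  have hceil : ⌈t * (q : ℝ) ^ (m + 1)⌉₊ ≤ c * q ^ 1 := Nat.ceil_le.2 <| by
    push_cast
    rw [pow_succ, ← mul_assoc, pow_one]
    gcongr
    exact Nat.le_ceil _
  calc C.testApprox f t m
      = (C.iter m).mapSubmodule (f ^ c • (C.iter 1).mapSubmodule ⊤) := by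
        rw [(C.iter 1).mapSubmodule_top (hC.iterate 1)]
        rfl
    _ = (C.iter (m + 1)).mapSubmodule (f ^ (c * q ^ 1) • ⊤) := by
        rw [← mapSubmodule_pow_smul, iter_mapSubmodule_iter, pow_mul]
    _ ≤ C.testApprox f t (m + 1) :=
        (C.iter (m + 1)).mapSubmodule_mono (Submodule.pow_smul_top_antitone f hceil)

theorem coe_testSubmodule (hC : Surjective C) (t : ℝ) :
    (C.testSubmodule f t : Set M) = testSet C q f t := by
  rw [testSubmodule, Submodule.coe_iSup_of_directed _ (C.monotone_testApprox f hC t).directed_le]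
  rfl

theorem exists_testSubmodule_eq_testApprox [IsNoetherian R M] (hC : Surjective C) (t : ℝ) :
    ∃ m, C.testSubmodule f t = C.testApprox f t m :=
  ⟨_, WellFoundedGT.iSup_eq_monotonicSequenceLimit ⟨C.testApprox f t, C.monotone_testApprox f hC t⟩⟩

theorem iter_mapSubmodule_pow_smul_top_le {S : Finset ℕ}
    (hS : ⊤ ≤ ⨆ k ∈ S, (C.iter k).mapSubmodule (f • ⊤)) (m n : ℕ) :
    (C.iter m).mapSubmodule (f ^ n • ⊤) ≤
      ⨆ k ∈ S, (C.iter (m + k)).mapSubmodule (f ^ (n * q ^ k + 1) • ⊤) :=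
  calc (C.iter m).mapSubmodule (f ^ n • ⊤)
      ≤ (C.iter m).mapSubmodule (f ^ n • ⨆ k ∈ S, (C.iter k).mapSubmodule (f • ⊤)) :=
        (C.iter m).mapSubmodule_mono (smul_mono_right _ hS)
    _ = ⨆ k ∈ S, (C.iter m).mapSubmodule ((C.iter k).mapSubmodule ((f ^ n) ^ q ^ k • f • ⊤)) := by
        simp only [Submodule.smul_iSup', mapSubmodule_iSup, mapSubmodule_pow_smul]
    _ = _ := by simp only [iter_mapSubmodule_iter, smul_smul, ← pow_mul, ← pow_succ]

theorem exists_pos_testSubmodule_eq_of_lt [IsNoetherian R M] (hq : 0 < q) (hC : Surjective C)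
    (hf : ⨆ k, (C.iter k).mapSubmodule (f • ⊤) = ⊤) (t : ℝ) :
    ∃ ε : ℝ, 0 < ε ∧ ∀ s, t ≤ s → s < t + ε → C.testSubmodule f s = C.testSubmodule f t := by
  obtain ⟨S, hS⟩ := CompleteLattice.IsCompactElement.exists_finset_of_le_iSup _
    ((Submodule.fg_iff_compact ⊤).1 (IsNoetherian.noetherian ⊤)) _ hf.ge
  obtain ⟨m, hm⟩ := C.exists_testSubmodule_eq_testApprox f hC t
  refine ⟨1 / (q : ℝ) ^ (m + S.sup id), by positivity, fun s hts hs =>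
    le_antisymm (C.antitone_testSubmodule f hts) ?_⟩
  rw [hm, testApprox]
  refine (C.iter_mapSubmodule_pow_smul_top_le f hS m _).trans (iSup₂_le fun k hk => ?_)
  refine le_trans ?_ (le_iSup (C.testApprox f s) (m + k))
  exact (C.iter (m + k)).mapSubmodule_mono (Submodule.pow_smul_top_antitone f
    (ceil_mul_pow_le_of_lt hq (Finset.le_sup (f := id) hk) hs))

theorem mfbang_eq_iSup : Mfbang C f = ⨆ k, (C.iter k).mapSubmodule (f • ⊤) :=
  iSup_congr fun k => Submodule.span_eq ((C.iter k).mapSubmodule (f • ⊤))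

end CartierMap

theorem FJNplus_eq_empty_of_forall_testSet_eq {R M : Type*} [CommRing R] [AddCommGroup M]
    [Module R M] {C : M → M} {q : ℕ} {f : R}
    (h : ∀ t : ℝ, 0 ≤ t → ∃ ε : ℝ, 0 < ε ∧
      ∀ s : ℝ, t ≤ s → s < t + ε → testSet C q f s = testSet C q f t) :
    FJNplus C q f = ∅ := by
  refine Set.eq_empty_of_forall_notMem fun t ⟨ht, hjump⟩ => ?_
  obtain ⟨ε, hε, hconst⟩ := h t ht
  have hstrict := hjump (ε / 2) (half_pos hε)
  rw [hconst (t + ε / 2) (by linarith) (by linarith)] at hstrict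
  exact hstrict.ne rfl

theorem stmt16_general {R M : Type*} [CommRing R] [AddCommGroup M] [Module R M]
    (p : ℕ) [Fact p.Prime] [IsNoetherianRing R]
    (e q : ℕ) (hq : q = p ^ e)
    (C : M → M) (hCadd : ∀ x y : M, C (x + y) = C x + C y)
    (hCsl : ∀ (a : R) (x : M), C (a ^ q • x) = a • C x)
    [Module.Finite R M] (hFpure : Function.Surjective C)
    (f : R) (hMf : Mfbang C f = ⊤) :
    -- right continuity of the test module filtration
    (∀ t : ℝ, 0 ≤ t → ∃ ε : ℝ, 0 < ε ∧
      ∀ s : ℝ, t ≤ s → s < t + ε → testSet C q f s = testSet C q f t) ∧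
    -- consequently `FJN⁺(M,f) = ∅` and `FJN(M,f) = FJN⁻(M,f)`
    (FJNplus C q f = ∅ ∧ FJNplus C q f ∪ FJNminus C q f = FJNminus C q f) := by
  obtain ⟨C, rfl⟩ : ∃ C' : CartierMap R M q, ⇑C' = C :=
    ⟨{ AddMonoidHom.mk' C hCadd with map_pow_smul' := hCsl }, rfl⟩
  have hright : ∀ t : ℝ, 0 ≤ t → ∃ ε : ℝ, 0 < ε ∧
      ∀ s : ℝ, t ≤ s → s < t + ε → testSet C q f s = testSet C q f t := by
    intro t _
    obtain ⟨ε, hε, hconst⟩ := C.exists_pos_testSubmodule_eq_of_lt f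
      (hq ▸ pow_pos (Fact.out : p.Prime).pos e) hFpure (C.mfbang_eq_iSup f ▸ hMf) t
    refine ⟨ε, hε, fun s hts hs => ?_⟩
    rw [← C.coe_testSubmodule f hFpure, ← C.coe_testSubmodule f hFpure, hconst s hts hs]
  have hplus := FJNplus_eq_empty_of_forall_testSet_eq hright
  exact ⟨hright, hplus, by rw [hplus, Set.empty_union]⟩

theorem stmt16 {R M : Type*} [CommRing R] [AddCommGroup M] [Module R M]
    (p : ℕ) [Fact p.Prime] [CharP R p] [IsNoetherianRing R]
    (hFF : (frobenius R p).Finite)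
    (e q : ℕ) (he : 1 ≤ e) (hq : q = p ^ e)
    (C : M → M) (hCadd : ∀ x y : M, C (x + y) = C x + C y)
    (hCsl : ∀ (a : R) (x : M), C (a ^ q • x) = a • C x)
    [Module.Finite R M] (hFpure : Function.Surjective C)
    (f : R) (hMf : Mfbang C f = ⊤) :
    -- right continuity of the test module filtration
    (∀ t : ℝ, 0 ≤ t → ∃ ε : ℝ, 0 < ε ∧
      ∀ s : ℝ, t ≤ s → s < t + ε → testSet C q f s = testSet C q f t) ∧
    -- consequently `FJN⁺(M,f) = ∅` and `FJN(M,f) = FJN⁻(M,f)`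
    (FJNplus C q f = ∅ ∧ FJNplus C q f ∪ FJNminus C q f = FJNminus C q f) :=
  stmt16_general p e q hq C hCadd hCsl hFpure f hMf
end
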